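/- arXiv:math/0507426 — 16 statements merged into one kernel-verified Lean document; each statement's English description precedes it below -/
import Mathlib

section
/- If the matrix S + R·(I − P_add) is positive definite (equivalently, the penalized least-squares problem has a unique minimizer), then Λ_{S,R} = I_q − Z·A_R·Zᵀ is positive definite. -/
open Matrix

/-- Symmetric real matrix moves across dot products. -/
lemma symm_dot_move {n : ℕ} (C : Matrix (Fin n) (Fin n) ℝ) (hC : Cᵀ = C)
    (a b : Fin n → ℝ) : a ⬝ᵥ (C *ᵥ b) = (C *ᵥ a) ⬝ᵥ b := by
  rw [Matrix.dotProduct_mulVec, ← Matrix.mulVec_transpose, hC]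

/-- If `S + R·(I − P_add)` is positive definite, then
`Λ_{S,R} = I_q − Z·A_R·Zᵀ` is positive definite, where `A_R = R·(S + R·I)⁻¹`. -/
theorem lambda_posDef_of_penalized_posDef
    {N q : ℕ} (hN : 0 < N) (hq : 0 < q)
    (S : Matrix (Fin N) (Fin N) ℝ) (hS : S.PosSemidef)
    (R : ℝ) (hR : 0 < R)
    (Z : Matrix (Fin q) (Fin N) ℝ)
    (hZ1 : (Zᵀ * Z) * (Zᵀ * Z) = Zᵀ * Z)
    (hZ2 : (Z * Zᵀ) * (Z * Zᵀ) = Z * Zᵀ)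
    (hSR : (S + R • (1 : Matrix (Fin N) (Fin N) ℝ)).PosDef)
    (A : Matrix (Fin N) (Fin N) ℝ)
    (hA : A = R • (S + R • (1 : Matrix (Fin N) (Fin N) ℝ))⁻¹)
    (hpen : (S + R • ((1 : Matrix (Fin N) (Fin N) ℝ) - Zᵀ * Z)).PosDef) :
    ((1 : Matrix (Fin q) (Fin q) ℝ) - Z * A * Zᵀ).PosDef := by
  set M : Matrix (Fin N) (Fin N) ℝ := S + R • (1 : Matrix (Fin N) (Fin N) ℝ) with hMdef
  have hSsymm : Sᵀ = S := by
    have := hS.isHermitian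
    rwa [Matrix.IsHermitian, Matrix.conjTranspose_eq_transpose_of_trivial] at this
  have hMsymm : Mᵀ = M := by
    have := hSR.isHermitian
    rwa [Matrix.IsHermitian, Matrix.conjTranspose_eq_transpose_of_trivial] at this
  have hdet : IsUnit M.det := (Matrix.isUnit_iff_isUnit_det M).mp hSR.isUnit
  have hMM : M * M⁻¹ = 1 := Matrix.mul_nonsing_inv M hdet
  have hMinvsymm : (M⁻¹)ᵀ = M⁻¹ := by
    rw [Matrix.transpose_nonsing_inv, hMsymm]
  -- Z * Zᵀ * Z = Z
  have h1 : Zᵀ * (Z * (Zᵀ * Z)) = Zᵀ * Z := by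
    simpa only [Matrix.mul_assoc] using hZ1
  have hZZZ : Z * Zᵀ * Z = Z := by
    have h0 : (Z * Zᵀ * Z - Z)ᴴ * (Z * Zᵀ * Z - Z) = 0 := by
      rw [Matrix.conjTranspose_eq_transpose_of_trivial]
      simp only [Matrix.transpose_sub, Matrix.transpose_mul, Matrix.transpose_transpose,
        Matrix.sub_mul, Matrix.mul_sub]
      simp only [Matrix.mul_assoc, h1]
      abel
    have := Matrix.conjTranspose_mul_self_eq_zero.mp h0
    linear_combination (norm := noncomm_ring) this
  have hZtr : Zᵀ * Z * Zᵀ = Zᵀ := by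
    have := congrArg Matrix.transpose hZZZ
    simpa [Matrix.transpose_mul, Matrix.mul_assoc] using this
  -- symmetry of A
  have hAsymm : Aᵀ = A := by rw [hA, Matrix.transpose_smul, hMinvsymm]
  rw [Matrix.posDef_iff_dotProduct_mulVec]
  constructor
  · rw [Matrix.IsHermitian, Matrix.conjTranspose_eq_transpose_of_trivial]
    simp [Matrix.transpose_sub, Matrix.transpose_mul, Matrix.transpose_transpose,
      Matrix.mul_assoc, hAsymm]
  · intro x hx
    have hstar : star x = x := by simp
    rw [hstar]
    set w : Fin N → ℝ := Zᵀ *ᵥ x with hw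
    set u : Fin N → ℝ := M⁻¹ *ᵥ w with hu
    have hMu : M *ᵥ u = w := by
      rw [hu, Matrix.mulVec_mulVec, hMM, Matrix.one_mulVec]
    have hPw : (Zᵀ * Z) *ᵥ w = w := by
      rw [hw, Matrix.mulVec_mulVec, hZtr]
    -- quadratic form
    have hform : x ⬝ᵥ (((1 : Matrix (Fin q) (Fin q) ℝ) - Z * A * Zᵀ) *ᵥ x)
        = x ⬝ᵥ x - R * (w ⬝ᵥ u) := by
      rw [Matrix.sub_mulVec, dotProduct_sub, Matrix.one_mulVec]
      congr 1
      rw [Matrix.mul_assoc, ← Matrix.mulVec_mulVec, Matrix.dotProduct_mulVec,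
        ← Matrix.mulVec_transpose, ← hw, hA]
      rw [← Matrix.mulVec_mulVec, Matrix.smul_mulVec, dotProduct_smul,
        smul_eq_mul, ← hw, ← hu]
    rw [hform]
    -- split into two nonnegative pieces
    have key1 : x ⬝ᵥ x - w ⬝ᵥ w = (x - Z *ᵥ w) ⬝ᵥ (x - Z *ᵥ w) := by
      have hxZw : x ⬝ᵥ (Z *ᵥ w) = w ⬝ᵥ w := by
        rw [Matrix.dotProduct_mulVec, ← Matrix.mulVec_transpose, ← hw]
      have hZwZw : (Z *ᵥ w) ⬝ᵥ (Z *ᵥ w) = w ⬝ᵥ w := by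
        rw [Matrix.dotProduct_mulVec, ← Matrix.mulVec_transpose,
          Matrix.mulVec_mulVec, hPw]
      have hcomm : (Z *ᵥ w) ⬝ᵥ x = w ⬝ᵥ w := by rw [dotProduct_comm, hxZw]
      simp only [dotProduct_sub, sub_dotProduct, hxZw, hZwZw, hcomm]
      ring
    have key2 : w ⬝ᵥ w - R * (w ⬝ᵥ u)
        = (S *ᵥ u) ⬝ᵥ (S *ᵥ u) + R * (u ⬝ᵥ (S *ᵥ u)) := by
      have hww : w ⬝ᵥ w = u ⬝ᵥ ((M * M) *ᵥ u) := by
        rw [← hMu, symm_dot_move M hMsymm, Matrix.mulVec_mulVec, dotProduct_comm]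
      have hwu : w ⬝ᵥ u = u ⬝ᵥ (M *ᵥ u) := by
        rw [← hMu, dotProduct_comm]
      have hMMid : M * M - R • M = S * S + R • S := by
        rw [hMdef]
        simp only [Matrix.add_mul, Matrix.mul_add, Matrix.smul_mul, Matrix.mul_smul,
          Matrix.one_mul, Matrix.mul_one, smul_add, smul_smul]
        abel
      have hSSu : u ⬝ᵥ ((S * S) *ᵥ u) = (S *ᵥ u) ⬝ᵥ (S *ᵥ u) := by
        rw [← Matrix.mulVec_mulVec, symm_dot_move S hSsymm]
      calc w ⬝ᵥ w - R * (w ⬝ᵥ u)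
          = u ⬝ᵥ ((M * M - R • M) *ᵥ u) := by
            rw [hww, hwu, Matrix.sub_mulVec, dotProduct_sub, Matrix.smul_mulVec,
              dotProduct_smul, smul_eq_mul]
        _ = (S *ᵥ u) ⬝ᵥ (S *ᵥ u) + R * (u ⬝ᵥ (S *ᵥ u)) := by
            rw [hMMid, Matrix.add_mulVec, dotProduct_add, Matrix.smul_mulVec,
              dotProduct_smul, smul_eq_mul, hSSu]
    have ha : 0 ≤ x ⬝ᵥ x - w ⬝ᵥ w := by
      rw [key1]
      have := dotProduct_star_self_nonneg (x - Z *ᵥ w)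
      simpa using this
    have hb1 : 0 ≤ (S *ᵥ u) ⬝ᵥ (S *ᵥ u) := by
      have := dotProduct_star_self_nonneg (S *ᵥ u)
      simpa using this
    have hb2 : 0 ≤ u ⬝ᵥ (S *ᵥ u) := by
      have := hS.dotProduct_mulVec_nonneg u
      simpa using this
    have hb : 0 ≤ w ⬝ᵥ w - R * (w ⬝ᵥ u) := by
      rw [key2]; positivity
    -- main strict inequality by contradiction
    by_contra hcon
    push_neg at hcon
    have haz : x ⬝ᵥ x - w ⬝ᵥ w = 0 := by linarith
    have hbz : w ⬝ᵥ w - R * (w ⬝ᵥ u) = 0 := by linarith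
    rw [key2] at hbz
    have hSu0 : (S *ᵥ u) ⬝ᵥ (S *ᵥ u) = 0 := by nlinarith
    have hSu : S *ᵥ u = 0 := by
      have : star (S *ᵥ u) ⬝ᵥ (S *ᵥ u) = 0 := by simpa using hSu0
      exact dotProduct_star_self_eq_zero.mp this
    have hwRu : w = R • u := by
      rw [← hMu, hMdef, Matrix.add_mulVec, hSu, Matrix.smul_mulVec,
        Matrix.one_mulVec]
      simp
    have hxZw : x = Z *ᵥ w := by
      rw [key1] at haz
      have : star (x - Z *ᵥ w) ⬝ᵥ (x - Z *ᵥ w) = 0 := by simpa using haz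
      have := dotProduct_star_self_eq_zero.mp this
      exact sub_eq_zero.mp this
    have hune : u ≠ 0 := by
      intro hu0
      apply hx
      have hw0 : w = 0 := by rw [hwRu, hu0, smul_zero]
      rw [hxZw, hw0, Matrix.mulVec_zero]
    have hpenu := hpen.dotProduct_mulVec_pos hune
    have huw : u = R⁻¹ • w := by
      rw [hwRu, smul_smul, inv_mul_cancel₀ (ne_of_gt hR), one_smul]
    have hPu : (Zᵀ * Z) *ᵥ u = u := by
      rw [huw, Matrix.mulVec_smul, hPw]
    have hSuu : u ⬝ᵥ (S *ᵥ u) = 0 := by rw [hSu, dotProduct_zero]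
    have : star u ⬝ᵥ ((S + R • ((1 : Matrix (Fin N) (Fin N) ℝ) - Zᵀ * Z)) *ᵥ u) = 0 := by
      simp only [star_trivial, Matrix.add_mulVec, Matrix.smul_mulVec,
        Matrix.sub_mulVec, Matrix.one_mulVec, hPu, sub_self, smul_zero,
        dotProduct_add, dotProduct_zero, add_zero]
      exact hSuu
    rw [this] at hpenu
    exact lt_irrefl 0 hpenu
end

section
/- Assume S + R·(I − P_add) is positive definite. Then Λ_{S,R} is invertible and (S + R·(I − P_add))⁻¹ = (I + A_R·Zᵀ·Λ_{S,R}⁻¹·Z)·(S + R·I)⁻¹ (formula (7) for the penalized estimator). -/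
/-!
The penalized matrix is a rank-`q` downdate of `S + R • 1`, namely `(S + R • 1) - Zᵀ * (R • Z)`,
and `Λ` is the capacitance matrix `1 - (R • Z) * (S + R • 1)⁻¹ * Zᵀ` of that downdate. The matrix
determinant lemma makes `Λ` invertible, and the Woodbury identity gives formula (7).
-/

open Matrix

namespace Matrix

variable {n m K : Type*} [Fintype n] [DecidableEq n] [Fintype m] [DecidableEq m] [CommRing K]

theorem isUnit_one_sub_mul_inv_mul {A : Matrix n n K} (U : Matrix n m K) (V : Matrix m n K)
    (hA : IsUnit A) (hAUV : IsUnit (A - U * V)) : IsUnit (1 - V * A⁻¹ * U) := by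
  rw [isUnit_iff_isUnit_det] at hA hAUV ⊢
  have hdet : (A - U * V).det = A.det * (1 - V * A⁻¹ * U).det := by
    simpa [sub_eq_add_neg, Matrix.mul_neg] using det_add_mul (-U) V hA
  exact isUnit_of_mul_isUnit_right (hdet ▸ hAUV)

/-- The Woodbury identity for a downdate `A - U * V`. -/
theorem inv_sub_mul_eq {A : Matrix n n K} (U : Matrix n m K) (V : Matrix m n K)
    (hA : IsUnit A) (hX : IsUnit (1 - V * A⁻¹ * U)) :
    (A - U * V)⁻¹ = (1 + A⁻¹ * U * (1 - V * A⁻¹ * U)⁻¹ * V) * A⁻¹ := by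
  set X := 1 - V * A⁻¹ * U
  refine inv_eq_left_inv ?_
  calc (1 + A⁻¹ * U * X⁻¹ * V) * A⁻¹ * (A - U * V)
      = (1 + A⁻¹ * U * X⁻¹ * V) * (1 - A⁻¹ * U * V) := by
        rw [Matrix.mul_assoc _ A⁻¹, Matrix.mul_sub,
          nonsing_inv_mul _ ((isUnit_iff_isUnit_det A).mp hA), ← Matrix.mul_assoc A⁻¹ U V]
    _ = 1 - A⁻¹ * U * V + A⁻¹ * U * (X⁻¹ * X) * V := by
        simp only [X, Matrix.add_mul, Matrix.mul_sub, Matrix.sub_mul,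
          Matrix.mul_one, Matrix.one_mul, Matrix.mul_assoc]
        abel
    _ = 1 := by
        rw [nonsing_inv_mul _ ((isUnit_iff_isUnit_det X).mp hX), Matrix.mul_one]
        abel

end Matrix

theorem penalized_inverse_formula_general
    {N q : ℕ}
    (S : Matrix (Fin N) (Fin N) ℝ)
    (R : ℝ)
    (Z : Matrix (Fin q) (Fin N) ℝ)
    (hSR : (S + R • (1 : Matrix (Fin N) (Fin N) ℝ)).PosDef)
    (A : Matrix (Fin N) (Fin N) ℝ)
    (hA : A = R • (S + R • (1 : Matrix (Fin N) (Fin N) ℝ))⁻¹)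
    (Λ : Matrix (Fin q) (Fin q) ℝ)
    (hΛ : Λ = (1 : Matrix (Fin q) (Fin q) ℝ) - Z * A * Zᵀ)
    (hpen : (S + R • ((1 : Matrix (Fin N) (Fin N) ℝ) - Zᵀ * Z)).PosDef) :
    IsUnit Λ ∧
      (S + R • ((1 : Matrix (Fin N) (Fin N) ℝ) - Zᵀ * Z))⁻¹ =
        ((1 : Matrix (Fin N) (Fin N) ℝ) + A * Zᵀ * Λ⁻¹ * Z) *
          (S + R • (1 : Matrix (Fin N) (Fin N) ℝ))⁻¹ := by
  set M := S + R • (1 : Matrix (Fin N) (Fin N) ℝ)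
  have hpen_eq : S + R • (1 - Zᵀ * Z) = M - Zᵀ * (R • Z) := by
    rw [smul_sub, Matrix.mul_smul, add_sub_assoc]
  have hΛ_eq : Λ = 1 - (R • Z) * M⁻¹ * Zᵀ := by
    rw [hΛ, hA]
    simp only [Matrix.mul_smul, Matrix.smul_mul]
  rw [hpen_eq] at hpen ⊢
  have hΛ_unit : IsUnit Λ := hΛ_eq ▸ isUnit_one_sub_mul_inv_mul _ _ hSR.isUnit hpen.isUnit
  refine ⟨hΛ_unit, ?_⟩
  rw [inv_sub_mul_eq _ _ hSR.isUnit (hΛ_eq ▸ hΛ_unit), ← hΛ_eq, hA]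
  simp only [Matrix.mul_smul, Matrix.smul_mul]

/-- If `S + R·(I − P_add)` is positive definite, then `Λ_{S,R}` is
invertible and `(S + R·(I − P_add))⁻¹ = (I + A_R·Zᵀ·Λ_{S,R}⁻¹·Z)·(S + R·I)⁻¹`
(formula (7) for the penalized estimator). -/
theorem penalized_inverse_formula
    {N q : ℕ} (hN : 0 < N) (hq : 0 < q)
    (S : Matrix (Fin N) (Fin N) ℝ) (hS : S.PosSemidef)
    (R : ℝ) (hR : 0 < R)
    (Z : Matrix (Fin q) (Fin N) ℝ)
    (hZ1 : (Zᵀ * Z) * (Zᵀ * Z) = Zᵀ * Z)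
    (hZ2 : (Z * Zᵀ) * (Z * Zᵀ) = Z * Zᵀ)
    (hSR : (S + R • (1 : Matrix (Fin N) (Fin N) ℝ)).PosDef)
    (A : Matrix (Fin N) (Fin N) ℝ)
    (hA : A = R • (S + R • (1 : Matrix (Fin N) (Fin N) ℝ))⁻¹)
    (Λ : Matrix (Fin q) (Fin q) ℝ)
    (hΛ : Λ = (1 : Matrix (Fin q) (Fin q) ℝ) - Z * A * Zᵀ)
    (hpen : (S + R • ((1 : Matrix (Fin N) (Fin N) ℝ) - Zᵀ * Z)).PosDef) :
    IsUnit Λ ∧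
      (S + R • ((1 : Matrix (Fin N) (Fin N) ℝ) - Zᵀ * Z))⁻¹ =
        ((1 : Matrix (Fin N) (Fin N) ℝ) + A * Zᵀ * Λ⁻¹ * Z) *
          (S + R • (1 : Matrix (Fin N) (Fin N) ℝ))⁻¹ :=
  penalized_inverse_formula_general S R Z hSR A hA Λ hΛ hpen
end

section
/- The matrix P_{S,R} is idempotent: P_{S,R}·P_{S,R} = P_{S,R}. -/
/-!
With `Λ = 1 - Z A Zᵀ` one has `Z (1 - A) Zᵀ = Λ - (1 - Z Zᵀ)`, so
`P² = Zᵀ Λ⁻¹ (Λ - (1 - Z Zᵀ)) Λ⁻¹ Z (1 - A)`, and it suffices that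
`Zᵀ Λ⁻¹ (1 - Z Zᵀ) = 0`.
Idempotency of `Z Zᵀ` gives `Z Zᵀ (1 - Z Zᵀ) = 0`, and by positivity `Z Zᵀ B = 0` forces
`Zᵀ B = 0`; so `Zᵀ` kills `1 - Z Zᵀ`, hence `Λ` and `Λ⁻¹` fix it.
-/

open Matrix

namespace Matrix

theorem conjTranspose_mul_one_sub_self_mul_conjTranspose {m n R : Type*} [Fintype n] [Fintype m]
    [DecidableEq m] [CommRing R] [PartialOrder R] [StarRing R] [StarOrderedRing R]
    [NoZeroDivisors R] {Z : Matrix m n R} (hZ : IsIdempotentElem (Z * Zᴴ)) :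
    Zᴴ * (1 - Z * Zᴴ) = 0 :=
  (self_mul_conjTranspose_mul_eq_zero Z _).mp <| by
    rw [Matrix.mul_sub, Matrix.mul_one, hZ.eq, sub_self]

variable {m n α : Type*} [Fintype m] [Fintype n] [DecidableEq m] [CommRing α]
  {Y : Matrix n m α} {Z : Matrix m n α}

theorem mul_inv_mul_one_sub_eq_zero (hYZ : Y * (1 - Z * Y) = 0) (A : Matrix n n α)
    (hΛ : IsUnit (1 - Z * A * Y)) :
    Y * (1 - Z * A * Y)⁻¹ * (1 - Z * Y) = 0 := by
  set Λ := 1 - Z * A * Y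
  have hfix : Λ * (1 - Z * Y) = 1 - Z * Y := by
    rw [Matrix.sub_mul, Matrix.one_mul, Matrix.mul_assoc, hYZ, Matrix.mul_zero, sub_zero]
  have hΛinv : Λ⁻¹ * Λ = 1 := nonsing_inv_mul Λ ((isUnit_iff_isUnit_det Λ).mp hΛ)
  calc Y * Λ⁻¹ * (1 - Z * Y) = Y * ((Λ⁻¹ * Λ) * (1 - Z * Y)) := by
        rw [Matrix.mul_assoc, Matrix.mul_assoc Λ⁻¹, hfix]
    _ = 0 := by rw [hΛinv, Matrix.one_mul, hYZ]

theorem isIdempotentElem_mul_inv_mul_one_sub [DecidableEq n] (hYZ : Y * (1 - Z * Y) = 0)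
    (A : Matrix n n α) (hΛ : IsUnit (1 - Z * A * Y)) :
    IsIdempotentElem (Y * (1 - Z * A * Y)⁻¹ * Z * (1 - A)) := by
  set Λ := 1 - Z * A * Y
  have hsplit : Z * (1 - A) * Y = Λ - (1 - Z * Y) := by
    rw [Matrix.mul_sub, Matrix.mul_one, Matrix.sub_mul]
    exact (sub_sub_sub_cancel_left _ _ _).symm
  have hΛinv : Λ * Λ⁻¹ = 1 := mul_nonsing_inv Λ ((isUnit_iff_isUnit_det Λ).mp hΛ)
  have hsandwich : Y * Λ⁻¹ * (Z * (1 - A) * Y) * Λ⁻¹ = Y * Λ⁻¹ := by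
    rw [hsplit, Matrix.mul_sub, Matrix.sub_mul, mul_inv_mul_one_sub_eq_zero hYZ A hΛ,
      Matrix.zero_mul, sub_zero, Matrix.mul_assoc, Matrix.mul_assoc, hΛinv, Matrix.mul_one]
  calc Y * Λ⁻¹ * Z * (1 - A) * (Y * Λ⁻¹ * Z * (1 - A))
      = Y * Λ⁻¹ * (Z * (1 - A) * Y) * Λ⁻¹ * (Z * (1 - A)) := by simp only [Matrix.mul_assoc]
    _ = Y * Λ⁻¹ * Z * (1 - A) := by rw [hsandwich]; simp only [Matrix.mul_assoc]

end Matrix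

theorem oblique_projection_idempotent_general
    {N q : ℕ}
    (Z : Matrix (Fin q) (Fin N) ℝ)
    (hZ2 : (Z * Zᵀ) * (Z * Zᵀ) = Z * Zᵀ)
    (A : Matrix (Fin N) (Fin N) ℝ)
    (Λ : Matrix (Fin q) (Fin q) ℝ)
    (hΛ : Λ = (1 : Matrix (Fin q) (Fin q) ℝ) - Z * A * Zᵀ)
    (hΛunit : IsUnit Λ)
    (P : Matrix (Fin N) (Fin N) ℝ)
    (hP : P = Zᵀ * Λ⁻¹ * Z * ((1 : Matrix (Fin N) (Fin N) ℝ) - A)) :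
    P * P = P := by
  have hZ : Zᵀ * (1 - Z * Zᵀ) = 0 := by
    simpa only [conjTranspose_eq_transpose_of_trivial] using
      conjTranspose_mul_one_sub_self_mul_conjTranspose (Z := Z)
        (by rw [conjTranspose_eq_transpose_of_trivial]; exact hZ2)
  subst hΛ hP
  exact (isIdempotentElem_mul_inv_mul_one_sub hZ A hΛunit).eq

/-- The oblique projection `P_{S,R} = Zᵀ·Λ_{S,R}⁻¹·Z·(I − A_R)`
is idempotent: `P_{S,R}·P_{S,R} = P_{S,R}`. -/
theorem oblique_projection_idempotent
    {N q : ℕ} (hN : 0 < N) (hq : 0 < q)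
    (S : Matrix (Fin N) (Fin N) ℝ) (hS : S.PosSemidef)
    (R : ℝ) (hR : 0 < R)
    (Z : Matrix (Fin q) (Fin N) ℝ)
    (hZ1 : (Zᵀ * Z) * (Zᵀ * Z) = Zᵀ * Z)
    (hZ2 : (Z * Zᵀ) * (Z * Zᵀ) = Z * Zᵀ)
    (hSR : (S + R • (1 : Matrix (Fin N) (Fin N) ℝ)).PosDef)
    (A : Matrix (Fin N) (Fin N) ℝ)
    (hA : A = R • (S + R • (1 : Matrix (Fin N) (Fin N) ℝ))⁻¹)
    (Λ : Matrix (Fin q) (Fin q) ℝ)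
    (hΛ : Λ = (1 : Matrix (Fin q) (Fin q) ℝ) - Z * A * Zᵀ)
    (hΛunit : IsUnit Λ)
    (P : Matrix (Fin N) (Fin N) ℝ)
    (hP : P = Zᵀ * Λ⁻¹ * Z * ((1 : Matrix (Fin N) (Fin N) ℝ) - A)) :
    P * P = P :=
  oblique_projection_idempotent_general Z hZ2 A Λ hΛ hΛunit P hP
end

section
/- The matrix (I − A_R)·P_{S,R} is symmetric, and P_{S,R}ᵀ·(I − A_R)·(I − P_{S,R}) = 0; that is, P_{S,R} is self-adjoint-and-orthogonal with respect to the positive semidefinite bilinear form (β, β') ↦ ⟨β, (I − A_R)·β'⟩. -/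
/-!
Write `B = I − A_R`, so that `Λ = (I − Z Zᵀ) + Z B Zᵀ`. From `(ZᵀZ)² = ZᵀZ` one gets
`Zᵀ Z Zᵀ = Zᵀ`; hence `Λ` fixes `I − Z Zᵀ`, which `Zᵀ` annihilates, and substituting
`Z B Zᵀ = Λ − (I − Z Zᵀ)` into `P²` shows `P² = P`. Since `B P = (Z B)ᵀ Λ⁻¹ (Z B)` with
`Λ` symmetric, `B P` is symmetric, so `Pᵀ B = B P` and `Pᵀ B (I − P) = B (P − P²) = 0`.
-/

open Matrix

namespace Matrix

variable {m n R : Type*} [Fintype m]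

theorem isSymm_transpose_mul_mul [CommSemiring R] {C : Matrix m m R} (M : Matrix m n R)
    (hC : C.IsSymm) : (Mᵀ * C * M).IsSymm := by
  simp only [IsSymm, transpose_mul, transpose_transpose, hC.eq, Matrix.mul_assoc]

variable [Fintype n]

theorem conjTranspose_mul_self_mul_conjTranspose_of_isIdempotentElem [DecidableEq n]
    [PartialOrder R] [Ring R] [StarRing R] [StarOrderedRing R] [NoZeroDivisors R]
    {A : Matrix m n R} (hA : IsIdempotentElem (Aᴴ * A)) : Aᴴ * A * Aᴴ = Aᴴ := by
  have hAAA : A * (Aᴴ * A - 1) = 0 := by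
    rw [← conjTranspose_mul_self_mul_eq_zero, Matrix.mul_sub, hA.eq, Matrix.mul_one, sub_self]
  have : A * Aᴴ * A = A := by
    rwa [Matrix.mul_sub, Matrix.mul_one, sub_eq_zero, ← Matrix.mul_assoc] at hAAA
  simpa only [conjTranspose_mul, conjTranspose_conjTranspose, Matrix.mul_assoc] using
    congrArg conjTranspose this

section ObliqueProjection

variable [DecidableEq m] [CommRing R] {Y : Matrix n m R} {Z : Matrix m n R}

theorem mul_one_sub_mul_eq_zero (hY : Y * Z * Y = Y) : Y * (1 - Z * Y) = 0 := by
  rw [Matrix.mul_sub, Matrix.mul_one, ← Matrix.mul_assoc, hY, sub_self]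

theorem nonsing_inv_mul_one_sub_mul (hY : Y * Z * Y = Y) (B : Matrix n n R)
    (hΛ : IsUnit (1 - Z * Y + Z * B * Y).det) :
    (1 - Z * Y + Z * B * Y)⁻¹ * (1 - Z * Y) = 1 - Z * Y := by
  set Λ := 1 - Z * Y + Z * B * Y
  have hQ : Λ * (1 - Z * Y) = 1 - Z * Y := by
    simp only [Λ, Matrix.add_mul, Matrix.sub_mul, Matrix.one_mul, Matrix.mul_assoc,
      mul_one_sub_mul_eq_zero hY, Matrix.mul_zero, sub_zero, add_zero]
  calc Λ⁻¹ * (1 - Z * Y) = Λ⁻¹ * (Λ * (1 - Z * Y)) := by rw [hQ]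
    _ = 1 - Z * Y := nonsing_inv_mul_cancel_left _ _ hΛ

theorem isIdempotentElem_mul_nonsing_inv_mul_mul (hY : Y * Z * Y = Y) (B : Matrix n n R)
    (hΛ : IsUnit (1 - Z * Y + Z * B * Y).det) :
    IsIdempotentElem (Y * (1 - Z * Y + Z * B * Y)⁻¹ * Z * B) := by
  set Λ := 1 - Z * Y + Z * B * Y with hΛdef
  have hZBY : Z * B * Y = Λ - (1 - Z * Y) := by rw [hΛdef]; abel
  have hYΛQ : Y * Λ⁻¹ * (1 - Z * Y) = 0 := by
    rw [Matrix.mul_assoc, nonsing_inv_mul_one_sub_mul hY B hΛ, mul_one_sub_mul_eq_zero hY]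
  unfold IsIdempotentElem
  calc Y * Λ⁻¹ * Z * B * (Y * Λ⁻¹ * Z * B)
      = Y * Λ⁻¹ * (Z * B * Y) * Λ⁻¹ * Z * B := by simp only [Matrix.mul_assoc]
    _ = Y * Λ⁻¹ * Z * B := by
      rw [hZBY, Matrix.mul_sub, Matrix.sub_mul, hYΛQ, Matrix.zero_mul, sub_zero,
        Matrix.mul_assoc Y, nonsing_inv_mul _ hΛ, Matrix.mul_one]

end ObliqueProjection

theorem transpose_mul_mul_one_sub_eq_zero [DecidableEq n] [CommRing R] {B P : Matrix n n R}
    (hB : B.IsSymm) (hBP : (B * P).IsSymm) (hP : IsIdempotentElem P) :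
    Pᵀ * B * (1 - P) = 0 := by
  have : Pᵀ * B = B * P := by rw [← hB.eq, ← transpose_mul, hB.eq, hBP.eq]
  rw [this, Matrix.mul_sub, Matrix.mul_one, Matrix.mul_assoc, hP.eq, sub_self]

end Matrix

theorem oblique_projection_selfAdjoint_orthogonal_general
    {N q : ℕ}
    (S : Matrix (Fin N) (Fin N) ℝ) (hS : S.PosSemidef)
    (R : ℝ)
    (Z : Matrix (Fin q) (Fin N) ℝ)
    (hZ1 : (Zᵀ * Z) * (Zᵀ * Z) = Zᵀ * Z)
    (A : Matrix (Fin N) (Fin N) ℝ)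
    (hA : A = R • (S + R • (1 : Matrix (Fin N) (Fin N) ℝ))⁻¹)
    (Λ : Matrix (Fin q) (Fin q) ℝ)
    (hΛ : Λ = (1 : Matrix (Fin q) (Fin q) ℝ) - Z * A * Zᵀ)
    (hΛunit : IsUnit Λ)
    (P : Matrix (Fin N) (Fin N) ℝ)
    (hP : P = Zᵀ * Λ⁻¹ * Z * ((1 : Matrix (Fin N) (Fin N) ℝ) - A)) :
    (((1 : Matrix (Fin N) (Fin N) ℝ) - A) * P)ᵀ =
        ((1 : Matrix (Fin N) (Fin N) ℝ) - A) * P ∧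
      Pᵀ * ((1 : Matrix (Fin N) (Fin N) ℝ) - A) *
        ((1 : Matrix (Fin N) (Fin N) ℝ) - P) = 0 := by
  have hSymmS : S.IsSymm := isHermitian_iff_isSymm.mp hS.1
  have hSymmA : A.IsSymm := hA ▸ ((hSymmS.add (isSymm_one.smul R)).inv.smul R)
  have hSymmB : (1 - A).IsSymm := isSymm_one.sub hSymmA
  have hSymmΛ : Λ.IsSymm := by
    simpa only [hΛ, transpose_transpose] using
      isSymm_one.sub (isSymm_transpose_mul_mul Zᵀ hSymmA)
  have hZ : Zᵀ * Z * Zᵀ = Zᵀ := by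
    simpa only [conjTranspose_eq_transpose_of_trivial] using
      conjTranspose_mul_self_mul_conjTranspose_of_isIdempotentElem (A := Z)
        (by rw [conjTranspose_eq_transpose_of_trivial]; exact hZ1)
  have hΛ' : Λ = 1 - Z * Zᵀ + Z * (1 - A) * Zᵀ := by
    rw [hΛ, Matrix.mul_sub, Matrix.sub_mul, Matrix.mul_one]; abel
  have hΛdet : IsUnit (1 - Z * Zᵀ + Z * (1 - A) * Zᵀ).det :=
    hΛ' ▸ (isUnit_iff_isUnit_det Λ).mp hΛunit
  have hIdemP : IsIdempotentElem P := by
    rw [hP, hΛ']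
    exact isIdempotentElem_mul_nonsing_inv_mul_mul hZ (1 - A) hΛdet
  have hSymmBP : ((1 - A) * P).IsSymm := by
    have : (1 - A) * P = (Z * (1 - A))ᵀ * Λ⁻¹ * (Z * (1 - A)) := by
      rw [hP, transpose_mul, hSymmB.eq]; simp only [Matrix.mul_assoc]
    exact this ▸ isSymm_transpose_mul_mul _ hSymmΛ.inv
  exact ⟨hSymmBP.eq, transpose_mul_mul_one_sub_eq_zero hSymmB hSymmBP hIdemP⟩

/-- `(I − A_R)·P_{S,R}` is symmetric and
`P_{S,R}ᵀ·(I − A_R)·(I − P_{S,R}) = 0`; i.e. `P_{S,R}` is self-adjoint and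
orthogonal with respect to the PSD bilinear form `(β, β') ↦ ⟨β, (I − A_R)·β'⟩`. -/
theorem oblique_projection_selfAdjoint_orthogonal
    {N q : ℕ} (hN : 0 < N) (hq : 0 < q)
    (S : Matrix (Fin N) (Fin N) ℝ) (hS : S.PosSemidef)
    (R : ℝ) (hR : 0 < R)
    (Z : Matrix (Fin q) (Fin N) ℝ)
    (hZ1 : (Zᵀ * Z) * (Zᵀ * Z) = Zᵀ * Z)
    (hZ2 : (Z * Zᵀ) * (Z * Zᵀ) = Z * Zᵀ)
    (hSR : (S + R • (1 : Matrix (Fin N) (Fin N) ℝ)).PosDef)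
    (A : Matrix (Fin N) (Fin N) ℝ)
    (hA : A = R • (S + R • (1 : Matrix (Fin N) (Fin N) ℝ))⁻¹)
    (Λ : Matrix (Fin q) (Fin q) ℝ)
    (hΛ : Λ = (1 : Matrix (Fin q) (Fin q) ℝ) - Z * A * Zᵀ)
    (hΛunit : IsUnit Λ)
    (P : Matrix (Fin N) (Fin N) ℝ)
    (hP : P = Zᵀ * Λ⁻¹ * Z * ((1 : Matrix (Fin N) (Fin N) ℝ) - A)) :
    (((1 : Matrix (Fin N) (Fin N) ℝ) - A) * P)ᵀ =
        ((1 : Matrix (Fin N) (Fin N) ℝ) - A) * P ∧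
      Pᵀ * ((1 : Matrix (Fin N) (Fin N) ℝ) - A) *
        ((1 : Matrix (Fin N) (Fin N) ℝ) - P) = 0 :=
  oblique_projection_selfAdjoint_orthogonal_general S hS R Z hZ1 A hA Λ hΛ hΛunit P hP
end

section
/- P_{S,R}·P_add = P_add; in other words, the oblique projection P_{S,R} acts as the identity on the additive subspace (the range of ZᵀZ). -/
open Matrix

/-!
Since `Z Zᵀ` is an orthogonal projection, `Z` is a partial isometry: `Z Zᵀ Z = Z`.
Hence `Z (I - A) Zᵀ Z = (I - Z A Zᵀ) Z = Λ Z`, and the factor `Λ⁻¹` in `P` cancels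
this `Λ`.
-/

namespace Matrix

variable {m n R : Type*} [Fintype m] [Fintype n] [DecidableEq m]

lemma mul_conjTranspose_mul_self_of_isIdempotentElem [PartialOrder R] [Ring R] [StarRing R]
    [StarOrderedRing R] [NoZeroDivisors R] {Z : Matrix m n R}
    (h : IsIdempotentElem (Z * Zᴴ)) : Z * Zᴴ * Z = Z := by
  have hker : (Z * Zᴴ - 1) * (Z * Zᴴ) = 0 := by
    rw [Matrix.sub_mul, h.eq, Matrix.one_mul, sub_self]
  rwa [mul_self_mul_conjTranspose_eq_zero, Matrix.sub_mul, Matrix.one_mul, sub_eq_zero] at hker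

lemma mul_one_sub_mul_mul_eq_one_sub_mul_mul [DecidableEq n] [Ring R] {Z : Matrix m n R}
    {Y : Matrix n m R} (hZ : Z * Y * Z = Z) (A : Matrix n n R) :
    Z * (1 - A) * (Y * Z) = (1 - Z * A * Y) * Z := by
  simp only [Matrix.mul_sub, Matrix.sub_mul, Matrix.mul_one, Matrix.one_mul, ← Matrix.mul_assoc,
    hZ]

end Matrix

theorem oblique_projection_fixes_additive_general
    {N q : ℕ}
    (Z : Matrix (Fin q) (Fin N) ℝ)
    (hZ2 : (Z * Zᵀ) * (Z * Zᵀ) = Z * Zᵀ)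
    (A : Matrix (Fin N) (Fin N) ℝ)
    (Λ : Matrix (Fin q) (Fin q) ℝ)
    (hΛ : Λ = (1 : Matrix (Fin q) (Fin q) ℝ) - Z * A * Zᵀ)
    (hΛunit : IsUnit Λ)
    (P : Matrix (Fin N) (Fin N) ℝ)
    (hP : P = Zᵀ * Λ⁻¹ * Z * ((1 : Matrix (Fin N) (Fin N) ℝ) - A)) :
    P * (Zᵀ * Z) = Zᵀ * Z := by
  rw [← conjTranspose_eq_transpose_of_trivial] at hZ2 hΛ hP ⊢
  have hΛZ : Z * (1 - A) * (Zᴴ * Z) = Λ * Z :=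
    hΛ ▸ mul_one_sub_mul_mul_eq_one_sub_mul_mul
      (mul_conjTranspose_mul_self_of_isIdempotentElem hZ2) A
  calc P * (Zᴴ * Z)
      = Zᴴ * Λ⁻¹ * (Z * (1 - A) * (Zᴴ * Z)) := by rw [hP]; simp only [Matrix.mul_assoc]
    _ = Zᴴ * (Λ⁻¹ * Λ) * Z := by rw [hΛZ]; simp only [Matrix.mul_assoc]
    _ = Zᴴ * Z := by
      rw [nonsing_inv_mul Λ ((isUnit_iff_isUnit_det Λ).mp hΛunit), Matrix.mul_one]

/-- `P_{S,R}·P_add = P_add`; the oblique projection `P_{S,R}` acts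
as the identity on the additive subspace (the range of `ZᵀZ`). -/
theorem oblique_projection_fixes_additive
    {N q : ℕ} (hN : 0 < N) (hq : 0 < q)
    (S : Matrix (Fin N) (Fin N) ℝ) (hS : S.PosSemidef)
    (R : ℝ) (hR : 0 < R)
    (Z : Matrix (Fin q) (Fin N) ℝ)
    (hZ1 : (Zᵀ * Z) * (Zᵀ * Z) = Zᵀ * Z)
    (hZ2 : (Z * Zᵀ) * (Z * Zᵀ) = Z * Zᵀ)
    (hSR : (S + R • (1 : Matrix (Fin N) (Fin N) ℝ)).PosDef)
    (A : Matrix (Fin N) (Fin N) ℝ)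
    (hA : A = R • (S + R • (1 : Matrix (Fin N) (Fin N) ℝ))⁻¹)
    (Λ : Matrix (Fin q) (Fin q) ℝ)
    (hΛ : Λ = (1 : Matrix (Fin q) (Fin q) ℝ) - Z * A * Zᵀ)
    (hΛunit : IsUnit Λ)
    (P : Matrix (Fin N) (Fin N) ℝ)
    (hP : P = Zᵀ * Λ⁻¹ * Z * ((1 : Matrix (Fin N) (Fin N) ℝ) - A)) :
    P * (Zᵀ * Z) = Zᵀ * Z :=
  oblique_projection_fixes_additive_general Z hZ2 A Λ hΛ hΛunit P hP
end

section
/- The penalized estimator satisfies β_R = A_R·P_{S,R}·β_ll + (I − A_R)·β_ll, and equivalently β_R = P_{S,R}·β_ll + (I − A_R)·(I − P_{S,R})·β_ll (equations (8) and (11): the penalized estimator is a pointwise compromise between an additive fit and the local linear fit, Proposition 1). -/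
open Matrix

/-!
With `M = S + R•I` and `A_R = R•M⁻¹`, the penalized normal matrix is the low-rank update
`S + R•(I − ZᵀZ) = M − (R•Zᵀ)Z`, and `Λ_{S,R} = I − Z M⁻¹ (R•Zᵀ)` is exactly the capacitance
matrix of that update. The Woodbury identity therefore writes `(S + R•(I − ZᵀZ))⁻¹ S` as
`M⁻¹S + M⁻¹(R•Zᵀ)Λ⁻¹Z M⁻¹S`, and since `M⁻¹S = I − A_R` the two terms are `I − A_R` and
`A_R P_{S,R}`. The second form of the compromise is a rearrangement of the first.
-/

namespace Matrix

variable {m n α : Type*} [Fintype m] [DecidableEq m] [Fintype n] [DecidableEq n] [CommRing α]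

theorem isUnit_one_sub_mul_inv_mul_s5 {M : Matrix n n α} {U : Matrix n m α} {V : Matrix m n α}
    (hM : IsUnit M) (hMUV : IsUnit (M - U * V)) : IsUnit (1 - V * M⁻¹ * U) := by
  have hfactor : 1 - M⁻¹ * U * V = M⁻¹ * (M - U * V) := by
    rw [Matrix.mul_sub, nonsing_inv_mul _ ((isUnit_iff_isUnit_det M).1 hM), Matrix.mul_assoc]
  rw [isUnit_iff_isUnit_det, Matrix.mul_assoc, det_one_sub_mul_comm, hfactor, det_mul]
  exact ((isUnit_iff_isUnit_det _).1 (isUnit_nonsing_inv_iff.2 hM)).mul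
    ((isUnit_iff_isUnit_det _).1 hMUV)

theorem sub_mul_inv_eq_add {M : Matrix n n α} {U : Matrix n m α} {V : Matrix m n α}
    (hM : IsUnit M) (hMUV : IsUnit (M - U * V)) :
    (M - U * V)⁻¹ = M⁻¹ + M⁻¹ * U * (1 - V * M⁻¹ * U)⁻¹ * V * M⁻¹ := by
  set Λ := 1 - V * M⁻¹ * U with hΛ
  have hMM : M * M⁻¹ = 1 := mul_nonsing_inv _ ((isUnit_iff_isUnit_det M).1 hM)
  have hΛΛ : Λ * Λ⁻¹ = 1 :=
    mul_nonsing_inv _ ((isUnit_iff_isUnit_det Λ).1 (isUnit_one_sub_mul_inv_mul_s5 hM hMUV))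
  have hUΛ : U * Λ = U - U * V * M⁻¹ * U := by
    simp only [hΛ, Matrix.mul_sub, Matrix.mul_one, Matrix.mul_assoc]
  refine inv_eq_right_inv ?_
  calc (M - U * V) * (M⁻¹ + M⁻¹ * U * Λ⁻¹ * V * M⁻¹)
      = M * M⁻¹ - U * V * M⁻¹ + (M * M⁻¹ * U - U * V * M⁻¹ * U) * Λ⁻¹ * V * M⁻¹ := by
        simp only [Matrix.mul_add, Matrix.sub_mul, Matrix.mul_assoc]
    _ = 1 - U * V * M⁻¹ + U * Λ * Λ⁻¹ * V * M⁻¹ := by rw [hMM, Matrix.one_mul, hUΛ]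
    _ = 1 := by rw [Matrix.mul_assoc U Λ, hΛΛ, Matrix.mul_one, sub_add_cancel]

end Matrix

theorem penalized_estimator_compromise_general
    {N q : ℕ}
    (S : Matrix (Fin N) (Fin N) ℝ)
    (R : ℝ)
    (Z : Matrix (Fin q) (Fin N) ℝ)
    (hSR : (S + R • (1 : Matrix (Fin N) (Fin N) ℝ)).PosDef)
    (A : Matrix (Fin N) (Fin N) ℝ)
    (hA : A = R • (S + R • (1 : Matrix (Fin N) (Fin N) ℝ))⁻¹)
    (Λ : Matrix (Fin q) (Fin q) ℝ)
    (hΛ : Λ = (1 : Matrix (Fin q) (Fin q) ℝ) - Z * A * Zᵀ)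
    (hpen : (S + R • ((1 : Matrix (Fin N) (Fin N) ℝ) - Zᵀ * Z)).PosDef)
    (P : Matrix (Fin N) (Fin N) ℝ)
    (hP : P = Zᵀ * Λ⁻¹ * Z * ((1 : Matrix (Fin N) (Fin N) ℝ) - A))
    (βll : Fin N → ℝ) (βR : Fin N → ℝ)
    (hβR : βR = ((S + R • ((1 : Matrix (Fin N) (Fin N) ℝ) - Zᵀ * Z))⁻¹ * S).mulVec βll) :
    βR = (A * P).mulVec βll + ((1 : Matrix (Fin N) (Fin N) ℝ) - A).mulVec βll ∧
      βR = P.mulVec βll +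
        (((1 : Matrix (Fin N) (Fin N) ℝ) - A) *
          ((1 : Matrix (Fin N) (Fin N) ℝ) - P)).mulVec βll := by
  set M : Matrix (Fin N) (Fin N) ℝ := S + R • 1
  have hpen_eq : S + R • (1 - Zᵀ * Z) = M - (R • Zᵀ) * Z := by
    rw [smul_sub, ← add_sub_assoc, Matrix.smul_mul]
  have hΛ_eq : Λ = 1 - Z * M⁻¹ * (R • Zᵀ) := by
    rw [hΛ, hA]; simp only [Matrix.mul_smul, Matrix.smul_mul]
  have h1A : 1 - A = M⁻¹ * S := by
    rw [hA, show S = M - R • 1 from (add_sub_cancel_right S _).symm, Matrix.mul_sub,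
      Matrix.mul_smul, Matrix.mul_one, nonsing_inv_mul _ ((isUnit_iff_isUnit_det M).1 hSR.isUnit)]
  have hAP : A * P = M⁻¹ * (R • Zᵀ) * Λ⁻¹ * Z * M⁻¹ * S := by
    rw [hP, h1A, hA]; simp only [Matrix.mul_smul, Matrix.smul_mul, Matrix.mul_assoc]
  have hest : (S + R • (1 - Zᵀ * Z))⁻¹ * S = A * P + (1 - A) := by
    rw [hpen_eq, sub_mul_inv_eq_add hSR.isUnit (hpen_eq ▸ hpen.isUnit), hAP, h1A, ← hΛ_eq,
      Matrix.add_mul, add_comm]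
  have hswap : A * P + (1 - A) = P + (1 - A) * (1 - P) := by noncomm_ring
  rw [hβR, hest]
  exact ⟨add_mulVec _ _ _, by rw [hswap, add_mulVec]⟩

/-- Proposition 1, equations (8) and (11): the penalized estimator
`β_R = (S + R·(I − P_add))⁻¹·S·β_ll` satisfies
`β_R = A_R·P_{S,R}·β_ll + (I − A_R)·β_ll` and
`β_R = P_{S,R}·β_ll + (I − A_R)·(I − P_{S,R})·β_ll`. -/
theorem penalized_estimator_compromise
    {N q : ℕ} (hN : 0 < N) (hq : 0 < q)
    (S : Matrix (Fin N) (Fin N) ℝ) (hS : S.PosSemidef)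
    (R : ℝ) (hR : 0 < R)
    (Z : Matrix (Fin q) (Fin N) ℝ)
    (hZ1 : (Zᵀ * Z) * (Zᵀ * Z) = Zᵀ * Z)
    (hZ2 : (Z * Zᵀ) * (Z * Zᵀ) = Z * Zᵀ)
    (hSR : (S + R • (1 : Matrix (Fin N) (Fin N) ℝ)).PosDef)
    (A : Matrix (Fin N) (Fin N) ℝ)
    (hA : A = R • (S + R • (1 : Matrix (Fin N) (Fin N) ℝ))⁻¹)
    (Λ : Matrix (Fin q) (Fin q) ℝ)
    (hΛ : Λ = (1 : Matrix (Fin q) (Fin q) ℝ) - Z * A * Zᵀ)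
    (hpen : (S + R • ((1 : Matrix (Fin N) (Fin N) ℝ) - Zᵀ * Z)).PosDef)
    (P : Matrix (Fin N) (Fin N) ℝ)
    (hP : P = Zᵀ * Λ⁻¹ * Z * ((1 : Matrix (Fin N) (Fin N) ℝ) - A))
    (βll : Fin N → ℝ) (βR : Fin N → ℝ)
    (hβR : βR = ((S + R • ((1 : Matrix (Fin N) (Fin N) ℝ) - Zᵀ * Z))⁻¹ * S).mulVec βll) :
    βR = (A * P).mulVec βll + ((1 : Matrix (Fin N) (Fin N) ℝ) - A).mulVec βll ∧
      βR = P.mulVec βll +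
        (((1 : Matrix (Fin N) (Fin N) ℝ) - A) *
          ((1 : Matrix (Fin N) (Fin N) ℝ) - P)).mulVec βll :=
  penalized_estimator_compromise_general S R Z hSR A hA Λ hΛ hpen P hP βll βR hβR
end

section
/- The additive part of the penalized estimator equals the oblique projection of the local linear estimator, and the non-additive part is the shrunken residual: P_add·β_R = P_{S,R}·β_ll and (I − P_add)·β_R = (I − A_R)·(I − P_{S,R})·β_ll (Proposition 2). -/
open Matrix

/-!
Write `M = S + R·I`, so that `A_R = R·M⁻¹`, `M⁻¹·S = I − A_R` and
`M⁻¹·(S + R·(I − ZᵀZ)) = I − A_R·ZᵀZ`. Hence `X = (S + R·(I − ZᵀZ))⁻¹·S` satisfies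
the fixed-point equation `X = (I − A_R) + A_R·ZᵀZ·X`. Multiplying it by `Z` gives
`Λ_{S,R}·(Z·X) = Z·(I − A_R)`, so `ZᵀZ·X = P_{S,R}`, and substituting this back gives
`(I − ZᵀZ)·X = (I − A_R)·(I − P_{S,R})`. The invertibility of `Λ_{S,R} = I − Z·A_R·Zᵀ` follows
from Sylvester's identity
`det (I − Z·A_R·Zᵀ) = det (I − A_R·ZᵀZ) = det M⁻¹ · det (S + R·(I − ZᵀZ))`.
-/

namespace Matrix

variable {m n 𝕜 : Type*} [Fintype m] [Fintype n] [DecidableEq n] [CommRing 𝕜]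

theorem inv_add_smul_one_mul_add_smul_one_sub {S : Matrix n n 𝕜} {c : 𝕜}
    (hM : IsUnit (S + c • 1).det) (B : Matrix n n 𝕜) :
    (S + c • 1)⁻¹ * (S + c • (1 - B)) = 1 - c • (S + c • 1)⁻¹ * B := by
  have hK : S + c • (1 - B) = (S + c • 1) - c • B := by
    rw [smul_sub]
    abel
  rw [hK, Matrix.mul_sub, nonsing_inv_mul _ hM, mul_smul_comm, smul_mul_assoc]

theorem inv_add_smul_one_sub_mul_eq {S : Matrix n n 𝕜} {c : 𝕜} {Y : Matrix n m 𝕜}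
    {Z : Matrix m n 𝕜} (hM : IsUnit (S + c • 1).det) (hK : IsUnit (S + c • (1 - Y * Z)).det) :
    (S + c • (1 - Y * Z))⁻¹ * S = (1 - c • (S + c • 1)⁻¹) +
      c • (S + c • 1)⁻¹ * (Y * (Z * ((S + c • (1 - Y * Z))⁻¹ * S))) := by
  set X := (S + c • (1 - Y * Z))⁻¹ * S
  have hMS : (S + c • 1)⁻¹ * S = 1 - c • (S + c • 1)⁻¹ := by
    simpa using inv_add_smul_one_mul_add_smul_one_sub hM 1
  have hMKX : (S + c • 1)⁻¹ * (S + c • (1 - Y * Z)) * X = (S + c • 1)⁻¹ * S := by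
    rw [Matrix.mul_assoc, mul_nonsing_inv_cancel_left _ _ hK]
  rw [inv_add_smul_one_mul_add_smul_one_sub hM, hMS, Matrix.sub_mul, Matrix.one_mul] at hMKX
  simp only [Matrix.mul_assoc] at hMKX
  rw [← hMKX]
  abel

theorem isUnit_det_one_sub_mul_smul_inv_mul [DecidableEq m] {S : Matrix n n 𝕜} {c : 𝕜}
    {Y : Matrix n m 𝕜} {Z : Matrix m n 𝕜} (hM : IsUnit (S + c • 1).det)
    (hK : IsUnit (S + c • (1 - Y * Z)).det) :
    IsUnit (1 - Z * (c • (S + c • 1)⁻¹) * Y).det := by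
  have hdet : (1 - Z * (c • (S + c • 1)⁻¹) * Y).det =
      (S + c • 1)⁻¹.det * (S + c • (1 - Y * Z)).det := by
    rw [Matrix.mul_assoc, det_one_sub_mul_comm, ← det_mul,
      inv_add_smul_one_mul_add_smul_one_sub hM, Matrix.mul_assoc]
  rw [hdet]
  exact (isUnit_nonsing_inv_det _ hM).mul hK

theorem mul_eq_inv_mul_of_eq_add [DecidableEq m] {A X : Matrix n n 𝕜} {Y : Matrix n m 𝕜}
    {Z : Matrix m n 𝕜}
    (hX : X = (1 - A) + A * (Y * (Z * X))) (hΛ : IsUnit (1 - Z * A * Y).det) :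
    Z * X = (1 - Z * A * Y)⁻¹ * (Z * (1 - A)) := by
  have hΛX : (1 - Z * A * Y) * (Z * X) = Z * (1 - A) := by
    calc (1 - Z * A * Y) * (Z * X)
          = Z * ((1 - A) + A * (Y * (Z * X))) - Z * A * Y * (Z * X) := by
          rw [← hX, Matrix.sub_mul, Matrix.one_mul]
      _ = Z * (1 - A) := by
          simp only [Matrix.mul_add, Matrix.mul_assoc]
          abel
  rw [← hΛX, nonsing_inv_mul_cancel_left _ _ hΛ]

theorem one_sub_mul_mul_eq_of_eq_add {A X : Matrix n n 𝕜} {Y : Matrix n m 𝕜} {Z : Matrix m n 𝕜}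
    (hX : X = (1 - A) + A * (Y * (Z * X))) : (1 - Y * Z) * X = (1 - A) * (1 - Y * (Z * X)) := by
  calc (1 - Y * Z) * X = (1 - A) + A * (Y * (Z * X)) - Y * (Z * X) := by
        rw [← hX, Matrix.sub_mul, Matrix.one_mul, Matrix.mul_assoc]
    _ = (1 - A) * (1 - Y * (Z * X)) := by noncomm_ring

end Matrix

theorem penalized_estimator_decomposition_general
    {N q : ℕ}
    (S : Matrix (Fin N) (Fin N) ℝ)
    (R : ℝ)
    (Z : Matrix (Fin q) (Fin N) ℝ)
    (hSR : (S + R • (1 : Matrix (Fin N) (Fin N) ℝ)).PosDef)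
    (A : Matrix (Fin N) (Fin N) ℝ)
    (hA : A = R • (S + R • (1 : Matrix (Fin N) (Fin N) ℝ))⁻¹)
    (Λ : Matrix (Fin q) (Fin q) ℝ)
    (hΛ : Λ = (1 : Matrix (Fin q) (Fin q) ℝ) - Z * A * Zᵀ)
    (hpen : (S + R • ((1 : Matrix (Fin N) (Fin N) ℝ) - Zᵀ * Z)).PosDef)
    (P : Matrix (Fin N) (Fin N) ℝ)
    (hP : P = Zᵀ * Λ⁻¹ * Z * ((1 : Matrix (Fin N) (Fin N) ℝ) - A))
    (βll : Fin N → ℝ) (βR : Fin N → ℝ)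
    (hβR : βR = ((S + R • ((1 : Matrix (Fin N) (Fin N) ℝ) - Zᵀ * Z))⁻¹ * S).mulVec βll) :
    (Zᵀ * Z).mulVec βR = P.mulVec βll ∧
      ((1 : Matrix (Fin N) (Fin N) ℝ) - Zᵀ * Z).mulVec βR =
        (((1 : Matrix (Fin N) (Fin N) ℝ) - A) *
          ((1 : Matrix (Fin N) (Fin N) ℝ) - P)).mulVec βll := by
  subst hA hβR
  have hM := isUnit_iff_ne_zero.2 hSR.det_pos.ne'
  have hK := isUnit_iff_ne_zero.2 hpen.det_pos.ne'
  have hX := inv_add_smul_one_sub_mul_eq hM hK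
  set X := (S + R • (1 - Zᵀ * Z))⁻¹ * S
  have hadd : Zᵀ * (Z * X) = P := by
    rw [mul_eq_inv_mul_of_eq_add hX (isUnit_det_one_sub_mul_smul_inv_mul hM hK), ← hΛ, hP]
    simp only [Matrix.mul_assoc]
  rw [mulVec_mulVec, mulVec_mulVec, Matrix.mul_assoc, hadd,
    one_sub_mul_mul_eq_of_eq_add hX, hadd]
  exact ⟨rfl, rfl⟩

/-- Proposition 2: the additive part of the penalized estimator
equals the oblique projection of the local linear estimator, and the
non-additive part is the shrunken residual:
`P_add·β_R = P_{S,R}·β_ll` and `(I − P_add)·β_R = (I − A_R)·(I − P_{S,R})·β_ll`. -/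
theorem penalized_estimator_decomposition
    {N q : ℕ} (hN : 0 < N) (hq : 0 < q)
    (S : Matrix (Fin N) (Fin N) ℝ) (hS : S.PosSemidef)
    (R : ℝ) (hR : 0 < R)
    (Z : Matrix (Fin q) (Fin N) ℝ)
    (hZ1 : (Zᵀ * Z) * (Zᵀ * Z) = Zᵀ * Z)
    (hZ2 : (Z * Zᵀ) * (Z * Zᵀ) = Z * Zᵀ)
    (hSR : (S + R • (1 : Matrix (Fin N) (Fin N) ℝ)).PosDef)
    (A : Matrix (Fin N) (Fin N) ℝ)
    (hA : A = R • (S + R • (1 : Matrix (Fin N) (Fin N) ℝ))⁻¹)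
    (Λ : Matrix (Fin q) (Fin q) ℝ)
    (hΛ : Λ = (1 : Matrix (Fin q) (Fin q) ℝ) - Z * A * Zᵀ)
    (hpen : (S + R • ((1 : Matrix (Fin N) (Fin N) ℝ) - Zᵀ * Z)).PosDef)
    (P : Matrix (Fin N) (Fin N) ℝ)
    (hP : P = Zᵀ * Λ⁻¹ * Z * ((1 : Matrix (Fin N) (Fin N) ℝ) - A))
    (βll : Fin N → ℝ) (βR : Fin N → ℝ)
    (hβR : βR = ((S + R • ((1 : Matrix (Fin N) (Fin N) ℝ) - Zᵀ * Z))⁻¹ * S).mulVec βll) :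
    (Zᵀ * Z).mulVec βR = P.mulVec βll ∧
      ((1 : Matrix (Fin N) (Fin N) ℝ) - Zᵀ * Z).mulVec βR =
        (((1 : Matrix (Fin N) (Fin N) ℝ) - A) *
          ((1 : Matrix (Fin N) (Fin N) ℝ) - P)).mulVec βll :=
  penalized_estimator_decomposition_general S R Z hSR A hA Λ hΛ hpen P hP βll βR hβR
end

section
/- The spectral norm of Z·A_R·Zᵀ is strictly less than 1; γ = Z·β_R is the unique fixed point of the map γ ↦ Z·A_R·Zᵀ·γ + Z·(I − A_R)·β_ll; and for every starting vector γ₀ ∈ ℝ^q, the iteration γ_{a+1} = Z·A_R·Zᵀ·γ_a + Z·(I − A_R)·β_ll converges to Z·β_R as a → ∞ (convergence of the iterative algorithm (9)). -/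
open Matrix Filter
open scoped RealInnerProductSpace

lemma real_conjT {m n : Type*} (A : Matrix m n ℝ) : Aᴴ = Aᵀ := by
  ext _ j; simp [Matrix.conjTranspose_apply]

lemma dot_self_nonneg {k : Type*} [Fintype k] (v : k → ℝ) : 0 ≤ v ⬝ᵥ v :=
  Finset.sum_nonneg fun i _ => mul_self_nonneg _

lemma dot_mulVec' {m n : Type*} [Fintype m] [Fintype n] (B : Matrix m n ℝ) (v : m → ℝ) (w : n → ℝ) :
    v ⬝ᵥ (B *ᵥ w) = (Bᵀ *ᵥ v) ⬝ᵥ w := by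
  rw [dotProduct_mulVec, mulVec_transpose]

lemma clm_apply {q : ℕ} (M : Matrix (Fin q) (Fin q) ℝ) (x : EuclideanSpace ℝ (Fin q)) :
    WithLp.equiv 2 _ (Matrix.toEuclideanCLM (𝕜 := ℝ) M x) = M *ᵥ (WithLp.equiv 2 _ x) := by
  exact Matrix.ofLp_toEuclideanCLM M x

lemma norm_sq_eq_dot {q : ℕ} (x : EuclideanSpace ℝ (Fin q)) :
    ‖x‖ ^ 2 = (WithLp.equiv 2 _ x) ⬝ᵥ (WithLp.equiv 2 _ x) := by
  rw [← real_inner_self_eq_norm_sq, EuclideanSpace.inner_eq_star_dotProduct, star_trivial]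
  rfl

lemma inner_clm_eq_dot {q : ℕ} (M : Matrix (Fin q) (Fin q) ℝ) (x : EuclideanSpace ℝ (Fin q)) :
    (inner ℝ x ((Matrix.toEuclideanCLM (𝕜 := ℝ) M) x) : ℝ)
      = (WithLp.equiv 2 _ x) ⬝ᵥ (M *ᵥ (WithLp.equiv 2 _ x)) := by
  rw [EuclideanSpace.inner_eq_star_dotProduct, star_trivial, Matrix.ofLp_toEuclideanCLM, dotProduct_comm]
  rfl

open scoped MatrixOrder in
lemma norm_lt_one_of_posSemidef_of_posDef {q : ℕ} (hq : 0 < q)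
    (M : Matrix (Fin q) (Fin q) ℝ) (hM : M.PosSemidef)
    (hΛ : ((1 : Matrix (Fin q) (Fin q) ℝ) - M).PosDef) :
    ‖Matrix.toEuclideanCLM (𝕜 := ℝ) M‖ < 1 := by
  classical
  set E := EuclideanSpace ℝ (Fin q)
  have hMsymm : Mᵀ = M := by rw [← real_conjT]; exact hM.1
  -- the function f x = ⟪x, (1-M) x⟫
  set f : E → ℝ := fun x => (inner ℝ x ((Matrix.toEuclideanCLM (𝕜 := ℝ) ((1 : Matrix (Fin q) (Fin q) ℝ) - M)) x) : ℝ) with hf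
  have hf_cont : Continuous f := continuous_id.inner (ContinuousLinearMap.continuous _)
  have hf_eq : ∀ x : E, f x = ‖x‖ ^ 2 - (WithLp.equiv 2 _ x) ⬝ᵥ (M *ᵥ (WithLp.equiv 2 _ x)) := by
    intro x
    rw [hf]
    simp only
    rw [inner_clm_eq_dot, sub_mulVec, one_mulVec, dotProduct_sub, norm_sq_eq_dot]
  -- a point on the sphere
  set x₁ : E := EuclideanSpace.single (⟨0, hq⟩ : Fin q) (1 : ℝ) with hx₁def
  have hx₁ : ‖x₁‖ = 1 := by rw [hx₁def, EuclideanSpace.norm_single, norm_one]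
  have hx₁mem : x₁ ∈ Metric.sphere (0 : E) 1 := by
    rwa [mem_sphere_zero_iff_norm]
  obtain ⟨xm, hxmmem, hmin⟩ := (isCompact_sphere (0 : E) 1).exists_isMinOn ⟨x₁, hx₁mem⟩
    hf_cont.continuousOn
  have hxm_norm : ‖xm‖ = 1 := mem_sphere_zero_iff_norm.mp hxmmem
  set ε : ℝ := f xm with hεdef
  have hxm_ne : WithLp.equiv 2 _ xm ≠ 0 := by
    intro h
    have : xm = 0 := by
      have := congrArg (WithLp.equiv 2 (Fin q → ℝ)).symm h
      simpa using this
    rw [this, norm_zero] at hxm_norm; norm_num at hxm_norm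
  have hε_pos : 0 < ε := by
    rw [hεdef, hf]
    simp only
    rw [inner_clm_eq_dot]
    have := hΛ.dotProduct_mulVec_pos hxm_ne
    rwa [star_trivial] at this
  have hε_le1 : ε ≤ 1 := by
    have h1 : ε ≤ f x₁ := hmin hx₁mem
    have h2 : f x₁ ≤ 1 := by
      rw [hf_eq, hx₁] ; have := hM.dotProduct_mulVec_nonneg (WithLp.equiv 2 _ x₁)
      rw [star_trivial] at this
      nlinarith
    linarith
  set c : ℝ := 1 - ε with hcdef
  have hc0 : 0 ≤ c := by simp [hcdef]; linarith
  have hc1 : c < 1 := by simp [hcdef]; linarith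
  -- quadratic bound
  have hqb : ∀ v : Fin q → ℝ, v ⬝ᵥ (M *ᵥ v) ≤ c * (v ⬝ᵥ v) := by
    intro v
    by_cases hv : v = 0
    · simp [hv]
    · set x : E := (WithLp.equiv 2 (Fin q → ℝ)).symm v with hxdef
      have hex : WithLp.equiv 2 (Fin q → ℝ) x = v := by rw [hxdef]; simp
      have hx0 : x ≠ 0 := by
        intro h; apply hv; rw [← hex, h]; simp
      have ht : 0 < ‖x‖ := norm_pos_iff.mpr hx0
      have hx'mem : ‖x‖⁻¹ • x ∈ Metric.sphere (0 : E) 1 := by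
        rw [mem_sphere_zero_iff_norm, norm_smul, norm_inv, norm_norm]
        field_simp
      have hεf : ε ≤ f (‖x‖⁻¹ • x) := hmin hx'mem
      have hsc : f (‖x‖⁻¹ • x) = ‖x‖⁻¹ * (‖x‖⁻¹ * f x) := by
        rw [hf]; simp only
        rw [ContinuousLinearMap.map_smul, real_inner_smul_left, real_inner_smul_right]
      have hfx : ε * (‖x‖ * ‖x‖) ≤ f x := by
        rw [hsc] at hεf
        have h := mul_le_mul_of_nonneg_left hεf (le_of_lt (mul_pos ht ht))
        calc ε * (‖x‖ * ‖x‖) = ‖x‖ * ‖x‖ * ε := by ring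
        _ ≤ ‖x‖ * ‖x‖ * (‖x‖⁻¹ * (‖x‖⁻¹ * f x)) := h
        _ = f x := by field_simp
      have hfx2 : f x = v ⬝ᵥ v - v ⬝ᵥ (M *ᵥ v) := by
        rw [hf_eq, hex, ← hex, ← norm_sq_eq_dot, hex]
      have hnv : ‖x‖ * ‖x‖ = v ⬝ᵥ v := by
        rw [← hex, ← norm_sq_eq_dot]; ring
      rw [hfx2, hnv] at hfx
      nlinarith [dot_self_nonneg v]
  -- matrix `c•1 - M` is PSD
  have hcM : ((c • (1 : Matrix (Fin q) (Fin q) ℝ)) - M).PosSemidef := by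
    refine Matrix.PosSemidef.of_dotProduct_mulVec_nonneg ?_ ?_
    · rw [Matrix.IsHermitian, real_conjT, transpose_sub, transpose_smul, transpose_one, hMsymm]
    · intro v
      rw [star_trivial, sub_mulVec, smul_mulVec, one_mulVec, dotProduct_sub,
        dotProduct_smul, smul_eq_mul]
      have := hqb v
      linarith
  -- conjugation by sqrt M
  have hBB : (CFC.sqrt M) * (CFC.sqrt M) = M := CFC.sqrt_mul_sqrt_self M hM.nonneg
  have hconj := hcM.conjTranspose_mul_mul_same (CFC.sqrt M)
  have hBH : (CFC.sqrt M)ᴴ = (CFC.sqrt M) := (CFC.sqrt_nonneg M).isSelfAdjoint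
  rw [hBH] at hconj
  have hkey : (CFC.sqrt M) * ((c • (1 : Matrix (Fin q) (Fin q) ℝ)) - M) * (CFC.sqrt M)
      = c • M - M * M := by
    have h2 : (CFC.sqrt M) * M * (CFC.sqrt M) = M * M := by
      calc (CFC.sqrt M) * M * (CFC.sqrt M) = (CFC.sqrt M) * ((CFC.sqrt M) * (CFC.sqrt M)) * (CFC.sqrt M) := by rw [hBB]
        _ = ((CFC.sqrt M) * (CFC.sqrt M)) * ((CFC.sqrt M) * (CFC.sqrt M)) := by simp only [Matrix.mul_assoc]
        _ = M * M := by rw [hBB]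
    rw [Matrix.mul_sub, Matrix.sub_mul, Matrix.mul_smul, Matrix.mul_one, Matrix.smul_mul, hBB, h2]
  rw [hkey] at hconj
  -- pointwise norm bound
  have hMM : ∀ v : Fin q → ℝ, (M *ᵥ v) ⬝ᵥ (M *ᵥ v) ≤ (c * c) * (v ⬝ᵥ v) := by
    intro v
    have h0 := hconj.dotProduct_mulVec_nonneg v
    rw [star_trivial, sub_mulVec, smul_mulVec, dotProduct_sub, dotProduct_smul,
      smul_eq_mul, ← Matrix.mulVec_mulVec, dot_mulVec' M v (M *ᵥ v), hMsymm] at h0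
    have h1 : v ⬝ᵥ (M *ᵥ v) ≤ c * (v ⬝ᵥ v) := hqb v
    nlinarith
  have hnorm_le : ‖Matrix.toEuclideanCLM (𝕜 := ℝ) M‖ ≤ c := by
    apply ContinuousLinearMap.opNorm_le_bound _ hc0
    intro x
    have hsq : ‖(Matrix.toEuclideanCLM (𝕜 := ℝ) M) x‖ ^ 2 ≤ (c * ‖x‖) ^ 2 := by
      rw [norm_sq_eq_dot, clm_apply]
      calc (M *ᵥ (WithLp.equiv 2 _ x)) ⬝ᵥ (M *ᵥ (WithLp.equiv 2 _ x))
          ≤ (c * c) * ((WithLp.equiv 2 _ x) ⬝ᵥ (WithLp.equiv 2 _ x)) := hMM _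
        _ = (c * ‖x‖) ^ 2 := by rw [← norm_sq_eq_dot]; ring
    have := Real.sqrt_le_sqrt hsq
    rwa [Real.sqrt_sq (norm_nonneg _), Real.sqrt_sq (by positivity)] at this
  linarith

/-- convergence of the iterative algorithm (9): the spectral norm
of `Z·A_R·Zᵀ` is strictly less than 1; `γ = Z·β_R` is the unique fixed point of
`γ ↦ Z·A_R·Zᵀ·γ + Z·(I − A_R)·β_ll`; and for every starting vector the iteration
converges to `Z·β_R`. -/
theorem iterative_algorithm_converges
    {N q : ℕ} (hN : 0 < N) (hq : 0 < q)
    (S : Matrix (Fin N) (Fin N) ℝ) (hS : S.PosSemidef)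
    (R : ℝ) (hR : 0 < R)
    (Z : Matrix (Fin q) (Fin N) ℝ)
    (hZ1 : (Zᵀ * Z) * (Zᵀ * Z) = Zᵀ * Z)
    (hZ2 : (Z * Zᵀ) * (Z * Zᵀ) = Z * Zᵀ)
    (hSR : (S + R • (1 : Matrix (Fin N) (Fin N) ℝ)).PosDef)
    (A : Matrix (Fin N) (Fin N) ℝ)
    (hA : A = R • (S + R • (1 : Matrix (Fin N) (Fin N) ℝ))⁻¹)
    (hpen : (S + R • ((1 : Matrix (Fin N) (Fin N) ℝ) - Zᵀ * Z)).PosDef)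
    (βll : Fin N → ℝ) (βR : Fin N → ℝ)
    (hβR : βR = ((S + R • ((1 : Matrix (Fin N) (Fin N) ℝ) - Zᵀ * Z))⁻¹ * S).mulVec βll) :
    ‖Matrix.toEuclideanCLM (𝕜 := ℝ) (Z * A * Zᵀ)‖ < 1 ∧
      (∀ γ : Fin q → ℝ,
        (Z * A * Zᵀ).mulVec γ + (Z * ((1 : Matrix (Fin N) (Fin N) ℝ) - A)).mulVec βll = γ ↔
          γ = Z.mulVec βR) ∧
      ∀ γ₀ : Fin q → ℝ,
        Tendsto
          (fun a : ℕ =>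
            (fun γ : Fin q → ℝ =>
                (Z * A * Zᵀ).mulVec γ +
                  (Z * ((1 : Matrix (Fin N) (Fin N) ℝ) - A)).mulVec βll)^[a] γ₀)
          atTop (nhds (Z.mulVec βR)) := by
  classical
  set T : Matrix (Fin N) (Fin N) ℝ := S + R • 1 with hTdef
  set K : Matrix (Fin N) (Fin N) ℝ := S + R • (1 - Zᵀ * Z) with hKdef
  set M : Matrix (Fin q) (Fin q) ℝ := Z * A * Zᵀ with hMdef
  have hTdet : IsUnit T.det := (Matrix.isUnit_iff_isUnit_det T).mp hSR.isUnit
  have hKdet : IsUnit K.det := (Matrix.isUnit_iff_isUnit_det K).mp hpen.isUnit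
  have hTW : T * T⁻¹ = 1 := Matrix.mul_nonsing_inv T hTdet
  have hWT : T⁻¹ * T = 1 := Matrix.nonsing_inv_mul T hTdet
  have hKK : K * K⁻¹ = 1 := Matrix.mul_nonsing_inv K hKdet
  -- Z^T Z Z^T = Z^T
  have hZ3 : Zᵀ * Z * Zᵀ = Zᵀ := by
    have h2' : Z * (Zᵀ * (Z * Zᵀ)) = Z * Zᵀ := by
      simpa [Matrix.mul_assoc] using hZ2
    have hD : (Zᵀ * Z * Zᵀ - Zᵀ)ᴴ * (Zᵀ * Z * Zᵀ - Zᵀ) = 0 := by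
      rw [real_conjT]
      simp only [transpose_sub, transpose_mul, transpose_transpose, Matrix.sub_mul,
        Matrix.mul_sub, Matrix.mul_assoc, h2']
      simp [h2']
    have := Matrix.conjTranspose_mul_self_eq_zero.mp hD
    exact sub_eq_zero.mp this
  -- A is PSD
  have hW_pd : (T⁻¹).PosDef := hSR.inv
  have hW_symm : T⁻¹ᵀ = T⁻¹ := by rw [← real_conjT]; exact hW_pd.1
  have hA_psd : A.PosSemidef := by
    refine Matrix.PosSemidef.of_dotProduct_mulVec_nonneg ?_ ?_
    · rw [hA, Matrix.IsHermitian, real_conjT, transpose_smul, hW_symm]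
    · intro v
      rw [hA, star_trivial, smul_mulVec, dotProduct_smul, smul_eq_mul]
      have := hW_pd.posSemidef.dotProduct_mulVec_nonneg v
      rw [star_trivial] at this
      exact mul_nonneg hR.le this
  have hM_psd : M.PosSemidef := by
    have := hA_psd.mul_mul_conjTranspose_same Z
    rwa [real_conjT] at this
  have hMherm : M.IsHermitian := hM_psd.1
  -- 1 - M is positive definite
  have hΛ_pd : ((1 : Matrix (Fin q) (Fin q) ℝ) - M).PosDef := by
    refine Matrix.PosDef.of_dotProduct_mulVec_pos ?_ ?_
    · exact Matrix.isHermitian_one.sub hMherm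
    · intro x hx
      rw [star_trivial]
      set y : Fin N → ℝ := Zᵀ *ᵥ x with hydef
      set u : Fin N → ℝ := T⁻¹ *ᵥ y with hudef
      have hTu : T *ᵥ u = y := by
        rw [hudef, Matrix.mulVec_mulVec, hTW, one_mulVec]
      have hy_decomp : y = S *ᵥ u + R • u := by
        rw [← hTu, hTdef, add_mulVec, smul_mulVec, one_mulVec]
      -- x ⬝ M x = R * (y ⬝ u)
      have hxMx : x ⬝ᵥ (M *ᵥ x) = R * (y ⬝ᵥ u) := by
        rw [hMdef, ← Matrix.mulVec_mulVec, ← Matrix.mulVec_mulVec, ← hydef, hA,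
          smul_mulVec, ← hudef, Matrix.mulVec_smul, dotProduct_smul, smul_eq_mul,
          dotProduct_mulVec, ← mulVec_transpose, ← hydef]
      -- y ⬝ y = x ⬝ (Z Zᵀ x)
      have hyy : y ⬝ᵥ y = x ⬝ᵥ ((Z * Zᵀ) *ᵥ x) := by
        rw [hydef, dot_mulVec' Zᵀ (Zᵀ *ᵥ x) x, transpose_transpose, Matrix.mulVec_mulVec,
          dotProduct_comm]
      -- x⬝x - y⬝y ≥ 0
      have hQsymm : (Z * Zᵀ)ᵀ = Z * Zᵀ := by
        rw [transpose_mul, transpose_transpose]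
      have h1 : 0 ≤ x ⬝ᵥ x - y ⬝ᵥ y := by
        have hw : (x - (Z * Zᵀ) *ᵥ x) ⬝ᵥ (x - (Z * Zᵀ) *ᵥ x)
            = x ⬝ᵥ x - x ⬝ᵥ ((Z * Zᵀ) *ᵥ x) := by
          have hQQ : ((Z * Zᵀ) *ᵥ x) ⬝ᵥ ((Z * Zᵀ) *ᵥ x) = x ⬝ᵥ ((Z * Zᵀ) *ᵥ x) := by
            rw [dot_mulVec' (Z * Zᵀ) ((Z * Zᵀ) *ᵥ x) x, hQsymm, Matrix.mulVec_mulVec, hZ2,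
              dotProduct_comm]
          have hQx : ((Z * Zᵀ) *ᵥ x) ⬝ᵥ x = x ⬝ᵥ ((Z * Zᵀ) *ᵥ x) := dotProduct_comm _ _
          rw [dotProduct_sub, sub_dotProduct, sub_dotProduct, hQQ, hQx]
          ring
        rw [hyy, ← hw]
        exact dot_self_nonneg _
      -- key decomposition
      have h3 : 0 ≤ u ⬝ᵥ (S *ᵥ u) := by
        have := hS.dotProduct_mulVec_nonneg u; rwa [star_trivial] at this
      have hsplit : x ⬝ᵥ x - R * (y ⬝ᵥ u)
          = (x ⬝ᵥ x - y ⬝ᵥ y) + ((S *ᵥ u) ⬝ᵥ (S *ᵥ u) + R * (u ⬝ᵥ (S *ᵥ u))) := by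
        rw [hy_decomp]
        simp only [dotProduct_add, add_dotProduct, dotProduct_smul, smul_dotProduct,
          smul_eq_mul]
        rw [dotProduct_comm u (S *ᵥ u)]
        ring
      have hgoal : x ⬝ᵥ (((1 : Matrix (Fin q) (Fin q) ℝ) - M) *ᵥ x)
          = x ⬝ᵥ x - R * (y ⬝ᵥ u) := by
        rw [sub_mulVec, one_mulVec, dotProduct_sub, hxMx]
      rw [hgoal]
      by_cases hSu : S *ᵥ u = 0
      · have hyRu : y = R • u := by rw [hy_decomp, hSu, zero_add]
        by_cases hy0 : y = 0
        · have hyu : y ⬝ᵥ u = 0 := by rw [hy0, zero_dotProduct]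
          rw [hyu, mul_zero, sub_zero]
          rcases lt_or_eq_of_le (dot_self_nonneg x) with h | h
          · exact h
          · exact absurd (dotProduct_self_eq_zero.mp h.symm) hx
        · exfalso
          have hpeny := hpen.dotProduct_mulVec_pos hy0
          rw [star_trivial] at hpeny
          have hSy : S *ᵥ y = 0 := by
            rw [hyRu, Matrix.mulVec_smul, hSu, smul_zero]
          have hPy : (Zᵀ * Z) *ᵥ y = y := by
            rw [hydef, Matrix.mulVec_mulVec, hZ3]
          have hzero : K *ᵥ y = 0 := by
            rw [hKdef, add_mulVec, smul_mulVec, sub_mulVec, one_mulVec, hPy, sub_self,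
              smul_zero, hSy, add_zero]
          rw [hzero, dotProduct_zero] at hpeny
          exact lt_irrefl 0 hpeny
      · have h2 : 0 < (S *ᵥ u) ⬝ᵥ (S *ᵥ u) := by
          rcases lt_or_eq_of_le (dot_self_nonneg (S *ᵥ u)) with h | h
          · exact h
          · exact absurd (dotProduct_self_eq_zero.mp h.symm) hSu
        rw [hsplit]
        have := mul_nonneg hR.le h3
        linarith
  -- part 1: norm bound
  have hnorm : ‖Matrix.toEuclideanCLM (𝕜 := ℝ) M‖ < 1 :=
    norm_lt_one_of_posSemidef_of_posDef hq M hM_psd hΛ_pd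
  -- fixed point identity on vectors
  have hTS : T - R • (1 : Matrix (Fin N) (Fin N) ℝ) = S := by
    rw [hTdef]; exact add_sub_cancel_right S (R • 1)
  have h1A : (1 : Matrix (Fin N) (Fin N) ℝ) - A = T⁻¹ * S := by
    rw [← hTS, Matrix.mul_sub, hWT, Matrix.mul_smul, Matrix.mul_one, hA]
  have hKβ : K *ᵥ βR = S *ᵥ βll := by
    rw [hβR, Matrix.mulVec_mulVec, ← Matrix.mul_assoc, hKK, Matrix.one_mul]
  have hmat : R • (Zᵀ * Z) + K = T := by
    rw [hKdef, hTdef, smul_sub]; abel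
  have hfix_vec : A *ᵥ ((Zᵀ * Z) *ᵥ βR) + ((1 : Matrix (Fin N) (Fin N) ℝ) - A) *ᵥ βll
      = βR := by
    rw [h1A, hA, smul_mulVec, ← Matrix.mulVec_smul, ← Matrix.mulVec_mulVec βll T⁻¹ S,
      ← hKβ, ← Matrix.mulVec_add, ← smul_mulVec, ← add_mulVec, hmat,
      Matrix.mulVec_mulVec, hWT, one_mulVec]
  set g : (Fin q → ℝ) → (Fin q → ℝ) := fun γ => M *ᵥ γ + (Z * (1 - A)) *ᵥ βll with hgdef
  have hfixg : g (Z *ᵥ βR) = Z *ᵥ βR := by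
    rw [hgdef]
    simp only
    have e1 : M *ᵥ (Z *ᵥ βR) = Z *ᵥ (A *ᵥ ((Zᵀ * Z) *ᵥ βR)) := by
      rw [hMdef, Matrix.mulVec_mulVec, Matrix.mulVec_mulVec, Matrix.mulVec_mulVec]
      simp only [Matrix.mul_assoc]
    have e2 : (Z * ((1 : Matrix (Fin N) (Fin N) ℝ) - A)) *ᵥ βll
        = Z *ᵥ (((1 : Matrix (Fin N) (Fin N) ℝ) - A) *ᵥ βll) :=
      (Matrix.mulVec_mulVec βll Z _).symm
    rw [e1, e2, ← Matrix.mulVec_add, hfix_vec]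
  -- contraction on Euclidean space
  set TC := Matrix.toEuclideanCLM (𝕜 := ℝ) M with hTCdef
  set cE : EuclideanSpace ℝ (Fin q) :=
    (WithLp.equiv 2 (Fin q → ℝ)).symm ((Z * ((1 : Matrix (Fin N) (Fin N) ℝ) - A)) *ᵥ βll)
    with hcEdef
  set F : EuclideanSpace ℝ (Fin q) → EuclideanSpace ℝ (Fin q) := fun γ => TC γ + cE with hFdef
  have hFg : ∀ γ : EuclideanSpace ℝ (Fin q),
      WithLp.equiv 2 (Fin q → ℝ) (F γ) = g (WithLp.equiv 2 (Fin q → ℝ) γ) := by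
    intro γ
    rw [hFdef, hgdef]
    simp only
    have hadd : WithLp.equiv 2 (Fin q → ℝ) (TC γ + cE)
        = WithLp.equiv 2 (Fin q → ℝ) (TC γ) + WithLp.equiv 2 (Fin q → ℝ) cE := rfl
    rw [hadd, hTCdef, clm_apply, hcEdef, Equiv.apply_symm_apply]
  have hlip : LipschitzWith ‖TC‖₊ F := by
    apply LipschitzWith.of_dist_le_mul
    intro a b
    rw [dist_eq_norm, dist_eq_norm]
    have hsub : F a - F b = TC (a - b) := by
      rw [hFdef]; simp only
      rw [map_sub]
      abel
    rw [hsub]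
    exact TC.le_opNorm _
  have hcontr : ContractingWith ‖TC‖₊ F := by
    refine ⟨?_, hlip⟩
    exact_mod_cast hnorm
  haveI : Nonempty (EuclideanSpace ℝ (Fin q)) := ⟨0⟩
  set p : EuclideanSpace ℝ (Fin q) := (WithLp.equiv 2 (Fin q → ℝ)).symm (Z *ᵥ βR) with hpdef
  have hfixF : Function.IsFixedPt F p := by
    apply (WithLp.equiv 2 (Fin q → ℝ)).injective
    rw [hFg p, hpdef, Equiv.apply_symm_apply]
    exact hfixg
  refine ⟨hnorm, ?_, ?_⟩
  · intro γ
    constructor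
    · intro h
      have hfixγ : Function.IsFixedPt F ((WithLp.equiv 2 (Fin q → ℝ)).symm γ) := by
        apply (WithLp.equiv 2 (Fin q → ℝ)).injective
        rw [hFg, Equiv.apply_symm_apply]
        exact h
      have huniq := hcontr.fixedPoint_unique' hfixγ hfixF
      have := congrArg (WithLp.equiv 2 (Fin q → ℝ)) huniq
      rwa [Equiv.apply_symm_apply, hpdef, Equiv.apply_symm_apply] at this
    · intro h
      rw [h]
      exact hfixg
  · intro γ₀
    have hsemi : Function.Semiconj (WithLp.equiv 2 (Fin q → ℝ)) F g := hFg
    have hiter := hcontr.tendsto_iterate_fixedPoint ((WithLp.equiv 2 (Fin q → ℝ)).symm γ₀)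
    have hfp : ContractingWith.fixedPoint F hcontr = p := (hcontr.fixedPoint_unique hfixF).symm
    rw [hfp] at hiter
    have hcont : Continuous (WithLp.equiv 2 (Fin q → ℝ)) :=
      PiLp.continuous_ofLp 2 (fun _ : Fin q => ℝ)
    have hcomp := (hcont.tendsto p).comp hiter
    have heq : (fun a : ℕ => WithLp.equiv 2 (Fin q → ℝ)
        (F^[a] ((WithLp.equiv 2 (Fin q → ℝ)).symm γ₀))) = fun a => g^[a] γ₀ := by
      funext a
      rw [(hsemi.iterate_right a).eq, Equiv.apply_symm_apply]
    have hp' : WithLp.equiv 2 (Fin q → ℝ) p = Z *ᵥ βR := by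
      rw [hpdef, Equiv.apply_symm_apply]
    rw [← heq, ← hp']
    exact hcomp
end

section
/- For every x ∈ ℝᴺ, the vector c = Z·(I − A_R)·x is orthogonal to the eigenspace {γ ∈ ℝ^q : Z·A_R·Zᵀ·γ = γ} of Z·A_R·Zᵀ for the eigenvalue 1, and consequently, for every starting vector γ₀ ∈ ℝ^q, the iteration γ_{a+1} = Z·A_R·Zᵀ·γ_a + c converges as a → ∞ (convergence of the iterative algorithm even in the case of non-uniqueness, Appendix A.0.6). -/
open Matrix Filter

lemma aux_conv {q : ℕ} (M : Matrix (Fin q) (Fin q) ℝ)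
    (hM : M.PosSemidef) (hIM : ((1 : Matrix (Fin q) (Fin q) ℝ) - M).PosSemidef)
    (c : Fin q → ℝ) (hc : ∀ γ : Fin q → ℝ, M.mulVec γ = γ → c ⬝ᵥ γ = 0)
    (γ₀ : Fin q → ℝ) :
    ∃ γlim, Tendsto (fun a : ℕ => (fun γ => M.mulVec γ + c)^[a] γ₀) atTop (nhds γlim) := by
  classical
  obtain ⟨U, eig, hUU, hUU', hspec, heig0, heig1, hw⟩ :
      ∃ (U : Matrix (Fin q) (Fin q) ℝ) (eig : Fin q → ℝ),
        star U * U = 1 ∧ U * star U = 1 ∧ M = U * diagonal eig * star U ∧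
        (∀ k, 0 ≤ eig k) ∧ (∀ k, eig k ≤ 1) ∧
        (∀ k, eig k = 1 → (star U *ᵥ c) k = 0) := by
    have hHerm : M.IsHermitian := hM.isHermitian
    refine ⟨(hHerm.eigenvectorUnitary : Matrix (Fin q) (Fin q) ℝ), hHerm.eigenvalues,
      Unitary.coe_star_mul_self hHerm.eigenvectorUnitary,
      Unitary.coe_mul_star_self hHerm.eigenvectorUnitary, ?_, ?_, ?_, ?_⟩
    · have := hHerm.spectral_theorem
      simpa using this
    · exact fun k => hM.eigenvalues_nonneg k
    · -- eigenvalues ≤ 1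
      intro k
      have hvec : M *ᵥ ⇑(hHerm.eigenvectorBasis k)
          = hHerm.eigenvalues k • ⇑(hHerm.eigenvectorBasis k) :=
        hHerm.mulVec_eigenvectorBasis k
      have hnorm : (⇑(hHerm.eigenvectorBasis k) : Fin q → ℝ) ⬝ᵥ ⇑(hHerm.eigenvectorBasis k) = 1 := by
        have h := hHerm.eigenvectorBasis.orthonormal.1 k
        rw [EuclideanSpace.norm_eq] at h
        have h2 : ∑ i, (hHerm.eigenvectorBasis k) i ^ 2 = 1 := by
          have := congrArg (fun t => t ^ 2) h
          simpa [Real.sq_sqrt (Finset.sum_nonneg fun i _ => sq_nonneg _), sq_abs] using this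
        simpa [dotProduct, pow_two] using h2
      have h := hIM.dotProduct_mulVec_nonneg ⇑(hHerm.eigenvectorBasis k)
      rw [sub_mulVec, one_mulVec, hvec, dotProduct_sub, dotProduct_smul] at h
      simp only [star_trivial, smul_eq_mul, hnorm] at h
      linarith [h]
    · -- orthogonality of c to columns with eigenvalue 1
      intro k hk
      have hvec : M *ᵥ ⇑(hHerm.eigenvectorBasis k)
          = hHerm.eigenvalues k • ⇑(hHerm.eigenvectorBasis k) :=
        hHerm.mulVec_eigenvectorBasis k
      have hcu : c ⬝ᵥ ⇑(hHerm.eigenvectorBasis k) = 0 := by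
        apply hc
        rw [hvec, hk, one_smul]
      have : (star (hHerm.eigenvectorUnitary : Matrix (Fin q) (Fin q) ℝ) *ᵥ c) k
          = c ⬝ᵥ ⇑(hHerm.eigenvectorBasis k) := by
        simp [mulVec, dotProduct, Matrix.IsHermitian.eigenvectorUnitary_apply, mul_comm]
      rw [this]
      exact hcu
  clear hc hM hIM
  have hmul : ∀ X Y : Matrix (Fin q) (Fin q) ℝ,
      (U * X * star U) * (U * Y * star U) = U * (X * Y) * star U := by
    intro X Y
    calc (U * X * star U) * (U * Y * star U)
        = U * X * (star U * U) * Y * star U := by noncomm_ring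
      _ = U * (X * Y) * star U := by rw [hUU]; noncomm_ring
  -- powers
  have hpow : ∀ a : ℕ, M ^ a = U * diagonal (fun k => eig k ^ a) * star U := by
    intro a
    induction a with
    | zero => simp [pow_zero, diagonal_one, hUU']
    | succ n ih =>
      rw [pow_succ, ih, hspec, hmul, diagonal_mul_diagonal]
      simp [pow_succ]
  set ind : Fin q → ℝ := fun k => if eig k = 1 then 1 else 0 with hind
  set L : Matrix (Fin q) (Fin q) ℝ := U * diagonal ind * star U with hL
  have htendd : Tendsto (fun a : ℕ => (fun k => eig k ^ a)) atTop (nhds ind) := by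
    rw [tendsto_pi_nhds]
    intro k
    by_cases hk : eig k = 1
    · simp only [hind, hk, if_pos rfl, one_pow]
      exact tendsto_const_nhds
    · have hlt : eig k < 1 := lt_of_le_of_ne (heig1 k) hk
      simp only [hind, if_neg hk]
      exact tendsto_pow_atTop_nhds_zero_of_lt_one (heig0 k) hlt
  have hcont : Continuous (fun d : Fin q → ℝ => U * diagonal d * star U) :=
    (continuous_const.matrix_mul (continuous_id.matrix_diagonal)).matrix_mul continuous_const
  have htendM : Tendsto (fun a : ℕ => M ^ a) atTop (nhds L) := by
    have := (hcont.tendsto ind).comp htendd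
    simp only [Function.comp_def] at this
    convert this using 2
    exact hpow _
  -- fixed point
  set d' : Fin q → ℝ := fun k => if eig k = 1 then 0 else (1 - eig k)⁻¹ with hd'
  set γs : Fin q → ℝ := (U * diagonal d' * star U) *ᵥ c with hγs
  have hfix : M *ᵥ γs + c = γs := by
    have key : γs - M *ᵥ γs = c := by
      have h1 : M *ᵥ γs = (U * diagonal (fun k => eig k * d' k) * star U) *ᵥ c := by
        rw [hγs, mulVec_mulVec, hspec, hmul, diagonal_mul_diagonal]
      rw [h1, hγs, ← sub_mulVec]
      rw [show U * diagonal d' * star U - U * (diagonal fun k => eig k * d' k) * star U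
        = U * (diagonal d' - diagonal (fun k => eig k * d' k)) * star U by noncomm_ring]
      rw [diagonal_sub]
      have hdd : (fun k => d' k - eig k * d' k) = fun k => if eig k = 1 then (0:ℝ) else 1 := by
        funext k
        by_cases hk : eig k = 1
        · simp [hd', hk]
        · have h0 : 1 - eig k ≠ 0 := sub_ne_zero.2 (Ne.symm hk)
          simp only [hd', if_neg hk]
          field_simp
      rw [show diagonal (fun k => d' k - eig k * d' k)
          = diagonal fun k => if eig k = 1 then (0:ℝ) else 1 by rw [hdd]]
      rw [← mulVec_mulVec, ← mulVec_mulVec]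
      have h2 : (diagonal fun k => if eig k = 1 then (0:ℝ) else 1) *ᵥ (star U *ᵥ c)
          = star U *ᵥ c := by
        funext k
        rw [mulVec_diagonal]
        by_cases hk : eig k = 1
        · simp [hk, hw k hk]
        · simp [hk]
      rw [h2, mulVec_mulVec, hUU', one_mulVec]
    rw [← key]
    abel
  -- iterate formula
  set δ : Fin q → ℝ := γ₀ - γs with hδ
  have hiter : ∀ a : ℕ, (fun γ => M *ᵥ γ + c)^[a] γ₀ = γs + (M ^ a) *ᵥ δ := by
    intro a
    induction a with
    | zero => simp [hδ]
    | succ n ih =>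
      rw [Function.iterate_succ_apply', ih]
      simp only [mulVec_add]
      rw [show M *ᵥ (M ^ n *ᵥ δ) = M ^ (n+1) *ᵥ δ from by rw [mulVec_mulVec, ← pow_succ']]
      rw [add_right_comm, hfix]
  refine ⟨γs + L *ᵥ δ, ?_⟩
  have hcont2 : Continuous (fun X : Matrix (Fin q) (Fin q) ℝ => γs + X *ᵥ δ) :=
    continuous_const.add (continuous_id.matrix_mulVec continuous_const)
  have h3 := (hcont2.tendsto L).comp htendM
  simp only [Function.comp_def] at h3
  convert h3 using 2
  exact hiter _

section MainAux
variable {N q : ℕ}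

lemma aux_facts (S : Matrix (Fin N) (Fin N) ℝ) (hS : S.PosSemidef)
    (R : ℝ) (hR : 0 < R)
    (hSR : (S + R • (1 : Matrix (Fin N) (Fin N) ℝ)).PosDef)
    (A : Matrix (Fin N) (Fin N) ℝ)
    (hA : A = R • (S + R • (1 : Matrix (Fin N) (Fin N) ℝ))⁻¹) :
    A.PosSemidef ∧ ((1 : Matrix (Fin N) (Fin N) ℝ) - A).PosSemidef := by
  classical
  set B := S + R • (1 : Matrix (Fin N) (Fin N) ℝ) with hB
  have hBunit : IsUnit B.det := by
    exact isUnit_iff_ne_zero.2 hSR.det_pos.ne'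
  set C := B⁻¹ with hC
  have hCpd : C.PosDef := hSR.inv
  have hCH : Cᴴ = C := hCpd.isHermitian.eq
  have hApsd : A.PosSemidef := by
    rw [hA]
    refine posSemidef_iff_dotProduct_mulVec.mpr ⟨?_, ?_⟩
    · have h := hCpd.isHermitian
      unfold Matrix.IsHermitian at *
      rw [conjTranspose_smul, h]
      simp
    · intro x
      simp only [smul_mulVec, dotProduct_smul, smul_eq_mul]
      exact mul_nonneg hR.le (hCpd.posSemidef.dotProduct_mulVec_nonneg x)
  refine ⟨hApsd, ?_⟩
  have hkey : (1 : Matrix (Fin N) (Fin N) ℝ) - A = C * (S * S + R • S) * C := by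
    have h1 : C * B = 1 := Matrix.nonsing_inv_mul B hBunit
    have h2 : B * C = 1 := Matrix.mul_nonsing_inv B hBunit
    have h3 : C * (S * S + R • S) * C = C * S * (B * C) := by
      rw [hB]
      noncomm_ring
    rw [h3, h2, mul_one]
    have h4 : C * B = C * S + R • C := by
      rw [hB]
      rw [mul_add, mul_smul_comm, mul_one]
    have := h1
    rw [h4] at this
    rw [hA]
    linear_combination (norm := noncomm_ring) -this
  rw [hkey]
  have hSS : (S * S + R • S).PosSemidef := by
    have h1 : (Sᴴ * S).PosSemidef := posSemidef_conjTranspose_mul_self S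
    rw [hS.isHermitian.eq] at h1
    refine h1.add ?_
    refine posSemidef_iff_dotProduct_mulVec.mpr ⟨?_, ?_⟩
    · have h := hS.isHermitian
      unfold Matrix.IsHermitian at *
      rw [conjTranspose_smul, h]
      simp
    · intro x
      simp only [smul_mulVec, dotProduct_smul, smul_eq_mul]
      exact mul_nonneg hR.le (hS.dotProduct_mulVec_nonneg x)
  have := hSS.mul_mul_conjTranspose_same C
  rwa [hCH] at this

end MainAux

/-- Appendix A.0.6, convergence in the case of non-uniqueness:
for every `x`, the vector `c = Z·(I − A_R)·x` is orthogonal to the eigenspace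
of `Z·A_R·Zᵀ` for the eigenvalue 1, and consequently for every starting vector
the iteration `γ_{a+1} = Z·A_R·Zᵀ·γ_a + c` converges. -/
theorem iterative_algorithm_converges_nonunique
    {N q : ℕ} (hN : 0 < N) (hq : 0 < q)
    (S : Matrix (Fin N) (Fin N) ℝ) (hS : S.PosSemidef)
    (R : ℝ) (hR : 0 < R)
    (Z : Matrix (Fin q) (Fin N) ℝ)
    (hZ1 : (Zᵀ * Z) * (Zᵀ * Z) = Zᵀ * Z)
    (hZ2 : (Z * Zᵀ) * (Z * Zᵀ) = Z * Zᵀ)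
    (hSR : (S + R • (1 : Matrix (Fin N) (Fin N) ℝ)).PosDef)
    (A : Matrix (Fin N) (Fin N) ℝ)
    (hA : A = R • (S + R • (1 : Matrix (Fin N) (Fin N) ℝ))⁻¹) :
    ∀ x : Fin N → ℝ,
      (∀ γ : Fin q → ℝ, (Z * A * Zᵀ).mulVec γ = γ →
        (Z * ((1 : Matrix (Fin N) (Fin N) ℝ) - A)).mulVec x ⬝ᵥ γ = 0) ∧
      ∀ γ₀ : Fin q → ℝ,
        ∃ γlim : Fin q → ℝ,
          Tendsto
            (fun a : ℕ =>
              (fun γ : Fin q → ℝ =>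
                  (Z * A * Zᵀ).mulVec γ +
                    (Z * ((1 : Matrix (Fin N) (Fin N) ℝ) - A)).mulVec x)^[a] γ₀)
            atTop (nhds γlim) := by
  classical
  obtain ⟨hApsd, hIApsd⟩ := aux_facts S hS R hR hSR A hA
  have hZt : Zᴴ = Zᵀ := Matrix.conjTranspose_eq_transpose_of_trivial Z
  -- M = Z A Zᵀ is PSD
  have hMpsd : (Z * A * Zᵀ).PosSemidef := by
    have := hApsd.mul_mul_conjTranspose_same Z
    rwa [hZt] at this
  -- 1 - Z Zᵀ is PSD
  have hPH : (Z * Zᵀ)ᵀ = Z * Zᵀ := by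
    rw [transpose_mul, transpose_transpose]
  have hPpsd : ((1 : Matrix (Fin q) (Fin q) ℝ) - Z * Zᵀ).PosSemidef := by
    have h1 : ((1 - Z * Zᵀ)ᴴ * (1 - Z * Zᵀ)).PosSemidef :=
      posSemidef_conjTranspose_mul_self _
    have h2 : (1 - Z * Zᵀ)ᴴ * (1 - Z * Zᵀ) = 1 - Z * Zᵀ := by
      calc (1 - Z * Zᵀ)ᴴ * (1 - Z * Zᵀ)
          = 1 - Z * Zᵀ - Z * Zᵀ + Z * Zᵀ * (Z * Zᵀ) := by
            rw [Matrix.conjTranspose_eq_transpose_of_trivial, transpose_sub, transpose_one, hPH]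
            noncomm_ring
        _ = 1 - Z * Zᵀ := by rw [hZ2]; abel
    rwa [h2] at h1
  -- 1 - M is PSD
  have hIMpsd : ((1 : Matrix (Fin q) (Fin q) ℝ) - Z * A * Zᵀ).PosSemidef := by
    have h1 : (Z * (1 - A) * Zᵀ).PosSemidef := by
      have := hIApsd.mul_mul_conjTranspose_same Z
      rwa [hZt] at this
    have h3 : Z * (1 - A) * Zᵀ = Z * Zᵀ - Z * A * Zᵀ := by
      rw [Matrix.mul_sub, Matrix.mul_one, Matrix.sub_mul]
    have h2 : (1 : Matrix (Fin q) (Fin q) ℝ) - Z * A * Zᵀ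
        = (1 - Z * Zᵀ) + Z * (1 - A) * Zᵀ := by
      rw [h3]; abel
    rw [h2]
    exact hPpsd.add h1
  intro x
  have horth : ∀ γ : Fin q → ℝ, (Z * A * Zᵀ).mulVec γ = γ →
      (Z * ((1 : Matrix (Fin N) (Fin N) ℝ) - A)).mulVec x ⬝ᵥ γ = 0 := by
    intro γ hγ
    set v : Fin N → ℝ := Zᵀ *ᵥ γ with hv
    have hvZ : γ ᵥ* Z = v := by
      rw [hv, mulVec_transpose]
    have h1 : γ ⬝ᵥ γ = v ⬝ᵥ (A *ᵥ v) := by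
      calc γ ⬝ᵥ γ = γ ⬝ᵥ ((Z * A * Zᵀ) *ᵥ γ) := by rw [hγ]
        _ = v ⬝ᵥ (A *ᵥ v) := by
            rw [← mulVec_mulVec, ← mulVec_mulVec, dotProduct_mulVec, hvZ, ← hv]
    have h2 : 0 ≤ γ ⬝ᵥ γ - v ⬝ᵥ v := by
      have h := hPpsd.dotProduct_mulVec_nonneg γ
      rw [sub_mulVec, one_mulVec, dotProduct_sub] at h
      simp only [star_trivial] at h
      have hvv : γ ⬝ᵥ ((Z * Zᵀ) *ᵥ γ) = v ⬝ᵥ v := by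
        rw [← mulVec_mulVec, dotProduct_mulVec, hvZ, ← hv]
      rw [hvv] at h
      linarith [h]
    have h3 : 0 ≤ v ⬝ᵥ v - v ⬝ᵥ (A *ᵥ v) := by
      have h := hIApsd.dotProduct_mulVec_nonneg v
      rw [sub_mulVec, one_mulVec, dotProduct_sub] at h
      simp only [star_trivial] at h
      linarith [h]
    have h4 : v ⬝ᵥ (((1 : Matrix (Fin N) (Fin N) ℝ) - A) *ᵥ v) = 0 := by
      rw [sub_mulVec, one_mulVec, dotProduct_sub]
      linarith [h1, h2, h3]
    have h5 : ((1 : Matrix (Fin N) (Fin N) ℝ) - A) *ᵥ v = 0 := by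
      have := (hIApsd.dotProduct_mulVec_zero_iff v).1
      apply this
      simpa using h4
    -- conclude
    rw [← mulVec_mulVec, dotProduct_comm, dotProduct_mulVec, hvZ, dotProduct_mulVec]
    have h6 : v ᵥ* ((1 : Matrix (Fin N) (Fin N) ℝ) - A) = 0 := by
      rw [← mulVec_transpose, transpose_sub, transpose_one]
      rw [show Aᵀ = A from by
        rw [← Matrix.conjTranspose_eq_transpose_of_trivial, hApsd.isHermitian.eq]]
      exact h5
    rw [h6, zero_dotProduct]
  refine ⟨horth, fun γ₀ => ?_⟩
  exact aux_conv (Z * A * Zᵀ) hMpsd hIMpsd _ horth γ₀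
end

section
/- For every r_ll ∈ H, the vector r_R := (S + R·id)⁻¹((S + R·P_{*,R}) r_ll) satisfies the penalized normal equations (S + R·(id − P)) r_R = S r_ll (verification that formula (13) solves the normal equations (12)). -/
open scoped RealInnerProductSpace

/-!
Write `A = S + R·id` and `r_R = A⁻¹ (S r + R P_{*,R} r)`. Since
`R P_{*,R} r = A P_{*,R} r - S P_{*,R} r`, we get `r_R = P_{*,R} r + A⁻¹ S (r - P_{*,R} r)`, and
the defining property of `P_{*,R}` kills the projection of the second summand, so
`P r_R = P_{*,R} r`. Then
`(S + R (id - P)) r_R = A r_R - R P r_R = S r + R P_{*,R} r - R P_{*,R} r = S r`.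
-/

namespace Module.End

variable {K M : Type*} [CommRing K] [AddCommGroup M] [Module K M]

theorem add_smul_sub_apply (S P : Module.End K M) (c : K) (x : M) :
    (S + c • (1 - P)) x = (S + c • 1) x - c • P x := by
  simp only [LinearMap.add_apply, LinearMap.smul_apply, LinearMap.sub_apply, one_apply, smul_sub]
  abel

theorem apply_add_smul_of_mul_add_smul_eq_one {S T : Module.End K M} {c : K}
    (hT : T * (S + c • 1) = 1) (x y : M) :
    T (S x + c • y) = y + T (S (x - y)) := by
  have hy : T ((S + c • 1) y) = y := by rw [← mul_apply, hT, one_apply]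
  have hsplit : S x + c • y = (S + c • 1) y + S (x - y) := by
    simp only [LinearMap.add_apply, LinearMap.smul_apply, one_apply, map_sub]
    abel
  rw [hsplit, map_add, hy]

theorem apply_apply_add_smul_eq {S T P Q : Module.End K M} {c : K}
    (hT : T * (S + c • 1) = 1) (x : M) (hPQ : P (Q x) = Q x)
    (hQ : P (T (S (Q x))) = P (T (S x))) :
    P (T ((S + c • Q) x)) = Q x := by
  rw [LinearMap.add_apply, LinearMap.smul_apply, apply_add_smul_of_mul_add_smul_eq_one hT,
    map_sub, map_sub, map_add, map_sub, hPQ, hQ, sub_self, add_zero]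

end Module.End

/-- `T` is `(S + R·id)⁻¹` and `Pstar` is `P_{*,R}`. -/
theorem formula13_solves_normal_equations_general
    {H : Type*} [NormedAddCommGroup H] [InnerProductSpace ℝ H] [FiniteDimensional ℝ H]
    (S : Module.End ℝ H)
    (V : Submodule ℝ H)
    (P : Module.End ℝ H) (hP : ∀ x : H, P x = (Submodule.orthogonalProjection V x : H))
    (R : ℝ)
    (T : Module.End ℝ H)
    (hT1 : T * (S + R • 1) = 1) (hT2 : (S + R • 1) * T = 1)
    (Pstar : Module.End ℝ H)
    (hPstar_mem : ∀ r : H, Pstar r ∈ V)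
    (hPstar_eq : ∀ r : H, P (T (S (Pstar r))) = P (T (S r)))
    (r_ll : H) :
    (S + R • (1 - P)) (T ((S + R • Pstar) r_ll)) = S r_ll := by
  have hfix : P (Pstar r_ll) = Pstar r_ll := by
    rw [hP, ← V.starProjection_apply, V.starProjection_eq_self_iff.mpr (hPstar_mem r_ll)]
  have hsolve : (S + R • 1) (T ((S + R • Pstar) r_ll)) = (S + R • Pstar) r_ll := by
    rw [← Module.End.mul_apply, hT2, Module.End.one_apply]
  rw [Module.End.add_smul_sub_apply, hsolve,
    Module.End.apply_apply_add_smul_eq hT1 r_ll hfix (hPstar_eq r_ll), LinearMap.add_apply,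
    LinearMap.smul_apply, add_sub_cancel_right]

/-- formula (13) solves the normal equations (12): for every
`r_ll ∈ H`, the vector `r_R := (S + R·id)⁻¹((S + R·P_{*,R}) r_ll)` satisfies the
penalized normal equations `(S + R·(id − P)) r_R = S r_ll`.  Here `T` is the
inverse of `S + R·id` and `Pstar` is the map `P_{*,R}`: `Pstar r` is the unique
element `v ∈ V` with `Λ_{*,R} v = P((S + R·id)⁻¹(S r))`. -/
theorem formula13_solves_normal_equations
    {H : Type*} [NormedAddCommGroup H] [InnerProductSpace ℝ H] [FiniteDimensional ℝ H]
    (S : Module.End ℝ H)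
    (hS_sym : ∀ x y : H, ⟪S x, y⟫ = ⟪x, S y⟫)
    (hS_psd : ∀ x : H, 0 ≤ ⟪x, S x⟫)
    (V : Submodule ℝ H)
    (P : Module.End ℝ H) (hP : ∀ x : H, P x = (Submodule.orthogonalProjection V x : H))
    (R : ℝ) (hR : 0 < R)
    (T : Module.End ℝ H)
    (hT1 : T * (S + R • 1) = 1) (hT2 : (S + R • 1) * T = 1)
    (Pstar : Module.End ℝ H)
    (hPstar_mem : ∀ r : H, Pstar r ∈ V)
    (hPstar_eq : ∀ r : H, P (T (S (Pstar r))) = P (T (S r)))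
    (hΛ_inj : ∀ v ∈ V, ∀ w ∈ V, P (T (S v)) = P (T (S w)) → v = w)
    (r_ll : H) :
    (S + R • (1 - P)) (T ((S + R • Pstar) r_ll)) = S r_ll :=
  formula13_solves_normal_equations_general S V P hP R T hT1 hT2 Pstar hPstar_mem hPstar_eq r_ll
end

section
/- The operator identity P∘(S + R·id)⁻¹∘S∘(id − P_{*,R}) = 0 holds; consequently, for every r_ll ∈ H, the solution r_R = (S + R·id)⁻¹((S + R·P_{*,R}) r_ll) of the penalized normal equations decomposes as P r_R = P_{*,R} r_ll and (id − P) r_R = (S + R·id)⁻¹(S((id − P_{*,R}) r_ll)) (Proposition 3). -/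
open scoped RealInnerProductSpace

/-!
Writing `T = (S + R·id)⁻¹`, the identity `T (S + R·id) = id` applied after `P_{*,R}` gives
`R T P_{*,R} = P_{*,R} - T S P_{*,R}`, hence `T (S + R P_{*,R}) = P_{*,R} + T S (id - P_{*,R})`.
The defining equation of `P_{*,R}` says exactly that `P` kills the second summand, while `P` fixes
the first one because `P_{*,R}` takes values in `V`.
-/

theorem mul_add_smul_eq_of_mul_add_smul_one_eq_one {K A : Type*} [CommRing K] [Ring A]
    [Algebra K A] {t s p : A} {c : K} (h : t * (s + c • 1) = 1) :
    t * (s + c • p) = p + t * s * (1 - p) := by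
  have hp : c • (t * p) = p - t * s * p := by
    calc c • (t * p) = t * (s + c • 1) * p - t * s * p := by
          rw [mul_add, add_mul, mul_smul_comm, mul_one, smul_mul_assoc]; abel
      _ = p - t * s * p := by rw [h, one_mul]
  rw [mul_add, mul_smul_comm, hp]
  noncomm_ring

theorem mul_add_eq_and_one_sub_mul_add_eq {A : Type*} [Ring A] {p q x : A}
    (hq : p * q = q) (hx : p * x = 0) : p * (q + x) = q ∧ (1 - p) * (q + x) = x := by
  constructor
  · rw [mul_add, hq, hx, add_zero]
  · rw [sub_mul, one_mul, mul_add, hq, hx, add_zero, add_sub_cancel_left]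

theorem proposition3_decomposition_general
    {H : Type*} [NormedAddCommGroup H] [InnerProductSpace ℝ H] [FiniteDimensional ℝ H]
    (S : Module.End ℝ H)
    (V : Submodule ℝ H)
    (P : Module.End ℝ H) (hP : ∀ x : H, P x = (V.orthogonalProjection x : H))
    (R : ℝ)
    (T : Module.End ℝ H)
    (hT1 : T * (S + R • 1) = 1)
    (Pstar : Module.End ℝ H)
    (hPstar_mem : ∀ r : H, Pstar r ∈ V)
    (hPstar_eq : ∀ r : H, P (T (S (Pstar r))) = P (T (S r))) :
    P * T * S * (1 - Pstar) = 0 ∧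
      ∀ r_ll : H,
        P (T ((S + R • Pstar) r_ll)) = Pstar r_ll ∧
          (1 - P) (T ((S + R • Pstar) r_ll)) = T (S ((1 - Pstar) r_ll)) := by
  have hker : P * T * S * (1 - Pstar) = 0 := by
    ext r
    simp [LinearMap.sub_apply, hPstar_eq]
  have hfix : P * Pstar = Pstar := LinearMap.ext fun r => by
    rw [Module.End.mul_apply, hP]
    exact Submodule.starProjection_eq_self_iff.mpr (hPstar_mem r)
  obtain ⟨hV, hVperp⟩ := mul_add_eq_and_one_sub_mul_add_eq hfix
    (x := T * S * (1 - Pstar)) (by simpa only [mul_assoc] using hker)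
  rw [← mul_add_smul_eq_of_mul_add_smul_one_eq_one hT1] at hV hVperp
  exact ⟨hker, fun r => ⟨LinearMap.congr_fun hV r, LinearMap.congr_fun hVperp r⟩⟩

/-- Proposition 3: `P∘(S + R·id)⁻¹∘S∘(id − P_{*,R}) = 0`, and
consequently for every `r_ll ∈ H` the solution
`r_R = (S + R·id)⁻¹((S + R·P_{*,R}) r_ll)` of the penalized normal equations
decomposes as `P r_R = P_{*,R} r_ll` and
`(id − P) r_R = (S + R·id)⁻¹(S((id − P_{*,R}) r_ll))`. -/
theorem proposition3_decomposition
    {H : Type*} [NormedAddCommGroup H] [InnerProductSpace ℝ H] [FiniteDimensional ℝ H]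
    (S : Module.End ℝ H)
    (hS_sym : ∀ x y : H, ⟪S x, y⟫ = ⟪x, S y⟫)
    (hS_psd : ∀ x : H, 0 ≤ ⟪x, S x⟫)
    (V : Submodule ℝ H)
    (P : Module.End ℝ H) (hP : ∀ x : H, P x = (V.orthogonalProjection x : H))
    (R : ℝ) (hR : 0 < R)
    (T : Module.End ℝ H)
    (hT1 : T * (S + R • 1) = 1) (hT2 : (S + R • 1) * T = 1)
    (Pstar : Module.End ℝ H)
    (hPstar_mem : ∀ r : H, Pstar r ∈ V)
    (hPstar_eq : ∀ r : H, P (T (S (Pstar r))) = P (T (S r)))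
    (hΛ_inj : ∀ v ∈ V, ∀ w ∈ V, P (T (S v)) = P (T (S w)) → v = w) :
    P * T * S * (1 - Pstar) = 0 ∧
      ∀ r_ll : H,
        P (T ((S + R • Pstar) r_ll)) = Pstar r_ll ∧
          (1 - P) (T ((S + R • Pstar) r_ll)) = T (S ((1 - Pstar) r_ll)) :=
  proposition3_decomposition_general S V P hP R T hT1 Pstar hPstar_mem hPstar_eq
end

section
/- For every x ∈ H, ⟨x, P((S + R·id)⁻¹(S(P x)))⟩ ≥ (‖S‖ + R)⁻¹·⟨P x, S(P x)⟩, where ‖S‖ denotes the operator norm of S; consequently, if ⟨v, S v⟩ > 0 for every nonzero v ∈ V, then the operator Λ_{*,R} : V → V obtained by restricting P∘(S + R·id)⁻¹∘S∘P to V is invertible (the lower bound Λ_{*,R} ≥ (‖S‖ + R)⁻¹·S_add of Appendix A.0.8). -/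
/-!
Put `w = T (P x)`, so that `P x = S w + R w`. Then `⟪x, P T S P x⟫ = ‖S w‖² + R ⟪w, S w⟫` and
`⟪P x, S P x⟫ = ⟪S w, S² w⟫ + 2R ‖S w‖² + R² ⟪w, S w⟫`, so the lower bound follows from
`⟪S w, S² w⟫ ≤ ‖S‖ ‖S w‖²` and `‖S w‖² ≤ ‖S‖ ⟪w, S w⟫`, the latter being Cauchy–Schwarz for the
semi-inner product `⟪·, S ·⟫`. The bound makes `Λ` injective on `V`, hence bijective because
`V` is finite-dimensional.
-/

open scoped RealInnerProductSpace

namespace ContinuousLinearMap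

variable {H : Type*} [NormedAddCommGroup H] [InnerProductSpace ℝ H] {S : H →L[ℝ] H}

lemma real_inner_map_self_le_opNorm_mul (S : H →L[ℝ] H) (x : H) : ⟪x, S x⟫ ≤ ‖S‖ * ‖x‖ ^ 2 :=
  calc ⟪x, S x⟫ ≤ ‖x‖ * ‖S x‖ := real_inner_le_norm _ _
    _ ≤ ‖x‖ * (‖S‖ * ‖x‖) := by gcongr; exact S.le_opNorm x
    _ = ‖S‖ * ‖x‖ ^ 2 := by ring

lemma IsPositive.norm_map_sq_le (hS : S.IsPositive) (x : H) : ‖S x‖ ^ 2 ≤ ‖S‖ * ⟪x, S x⟫ := by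
  have hsq : ⟪x, S (S x)⟫ = ‖S x‖ ^ 2 := by
    rw [← hS.inner_left_eq_inner_right, real_inner_self_eq_norm_sq]
  have hCS := LinearMap.BilinForm.apply_mul_apply_le_of_forall_zero_le
    ((innerₗ H).compl₂ S.toLinearMap) hS.inner_nonneg_right x (S x)
  simp only [LinearMap.compl₂_apply, coe_coe, innerₗ_apply_apply, hsq,
    real_inner_self_eq_norm_sq] at hCS
  rcases (sq_nonneg ‖S x‖).eq_or_lt with h0 | hpos
  · rw [← h0]; exact mul_nonneg (norm_nonneg S) (hS.inner_nonneg_right x)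
  refine le_of_mul_le_mul_right ?_ hpos
  calc ‖S x‖ ^ 2 * ‖S x‖ ^ 2 ≤ ⟪x, S x⟫ * ⟪S x, S (S x)⟫ := hCS
    _ ≤ ⟪x, S x⟫ * (‖S‖ * ‖S x‖ ^ 2) := by
      gcongr
      · exact hS.inner_nonneg_right x
      · exact S.real_inner_map_self_le_opNorm_mul (S x)
    _ = ‖S‖ * ⟪x, S x⟫ * ‖S x‖ ^ 2 := by ring

lemma IsPositive.inner_map_add_smul_le (hS : S.IsPositive) {R : ℝ} (hR : 0 ≤ R) (w : H) :
    ⟪S w + R • w, S (S w + R • w)⟫ ≤ (‖S‖ + R) * ⟪S w + R • w, S w⟫ := by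
  have hsym : ⟪w, S (S w)⟫ = ⟪S w, S w⟫ := (hS.inner_left_eq_inner_right w (S w)).symm
  have hquad := S.real_inner_map_self_le_opNorm_mul (S w)
  have hsq := hS.norm_map_sq_le w
  rw [← real_inner_self_eq_norm_sq] at hquad hsq
  simp only [map_add, map_smul, inner_add_left, inner_add_right, real_inner_smul_left,
    real_inner_smul_right, hsym]
  nlinarith [mul_le_mul_of_nonneg_left hsq hR]

lemma IsPositive.inner_map_le_mul_inner_inverse_comp (hS : S.IsPositive) {R : ℝ} (hR : 0 ≤ R)
    {T : H →L[ℝ] H} (hT1 : T * (S + R • 1) = 1) (hT2 : (S + R • 1) * T = 1) (u : H) :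
    ⟪u, S u⟫ ≤ (‖S‖ + R) * ⟪u, T (S u)⟫ := by
  set w := T u
  have hu : S w + R • w = u := congr($hT2 u)
  have hTS : T (S u) = S w := by
    rw [← hu]
    simpa using congr($hT1 (S w))
  rw [hTS, ← hu]
  exact hS.inner_map_add_smul_le hR w

end ContinuousLinearMap

lemma LinearMap.existsUnique_mem_apply_eq_of_injOn {K E : Type*} [Field K] [AddCommGroup E]
    [Module K E] {p : Submodule K E} [FiniteDimensional K p] {f : E →ₗ[K] E}
    (hmaps : ∀ x ∈ p, f x ∈ p) (hinj : Set.InjOn f p) {w : E} (hw : w ∈ p) :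
    ∃! v, v ∈ p ∧ f v = w := by
  obtain ⟨v, hv, rfl⟩ := (LinearMap.injOn_iff_surjOn hmaps).1 hinj hw
  exact ⟨v, ⟨hv, rfl⟩, fun v' ⟨hv', h⟩ => hinj hv' hv h⟩

/-- lower bound `Λ_{*,R} ≥ (‖S‖ + R)⁻¹·S_add`, Appendix A.0.8:
for every `x ∈ H`, `⟪x, P((S + R·id)⁻¹(S(P x)))⟫ ≥ (‖S‖ + R)⁻¹·⟪P x, S(P x)⟫`;
consequently, if `⟪v, S v⟫ > 0` for every nonzero `v ∈ V`, then the operator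
`Λ_{*,R} : V → V` obtained by restricting `P∘(S + R·id)⁻¹∘S∘P` to `V` is
invertible.  Here `T` denotes the inverse of `S + R·id`. -/
theorem lambda_lower_bound_and_invertible
    {H : Type*} [NormedAddCommGroup H] [InnerProductSpace ℝ H] [FiniteDimensional ℝ H]
    (S : H →L[ℝ] H)
    (hS_sym : ∀ x y : H, ⟪S x, y⟫ = ⟪x, S y⟫)
    (hS_psd : ∀ x : H, 0 ≤ ⟪x, S x⟫)
    (V : Submodule ℝ H)
    (P : H →L[ℝ] H) (hP : ∀ x : H, P x = (V.orthogonalProjectionOnto x : H))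
    (R : ℝ) (hR : 0 < R)
    (T : H →L[ℝ] H)
    (hT1 : T * (S + R • 1) = 1) (hT2 : (S + R • 1) * T = 1) :
    (∀ x : H, (‖S‖ + R)⁻¹ * ⟪P x, S (P x)⟫ ≤ ⟪x, P (T (S (P x)))⟫) ∧
      ((∀ v ∈ V, v ≠ 0 → 0 < ⟪v, S v⟫) →
        ∀ w ∈ V, ∃! v : H, v ∈ V ∧ P (T (S v)) = w) := by
  obtain rfl : P = V.starProjection := ContinuousLinearMap.ext hP
  have hS : S.IsPositive :=
    (S.isPositive_iff).2 ⟨hS_sym, fun x => hS_sym x x ▸ hS_psd x⟩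
  have hSR : 0 < ‖S‖ + R := by positivity
  have lower (x : H) : (‖S‖ + R)⁻¹ * ⟪V.starProjection x, S (V.starProjection x)⟫ ≤
      ⟪x, V.starProjection (T (S (V.starProjection x)))⟫ := by
    rw [← V.inner_starProjection_left_eq_right, inv_mul_le_iff₀ hSR]
    exact hS.inner_map_le_mul_inner_inverse_comp hR.le hT1 hT2 _
  refine ⟨lower, fun hSV w hw => ?_⟩
  refine (V.starProjection ∘L T ∘L S).toLinearMap.existsUnique_mem_apply_eq_of_injOn
    (fun x _ => V.starProjection_apply_mem _) ?_ hw
  refine LinearMap.disjoint_ker_iff_injOn.1 (LinearMap.disjoint_ker.2 fun v hv hv0 => ?_)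
  replace hv0 : V.starProjection (T (S v)) = 0 := hv0
  by_contra hne
  have hlower := lower v
  rw [V.starProjection_eq_self_iff.2 hv, hv0, inner_zero_right] at hlower
  exact hlower.not_gt (mul_pos (inv_pos.2 hSR) (hSV v hv hne))
end

section
/- Assume that S x = 0 and x ∈ V imply x = 0. Then for every R > 0 the operator S + R·(id − P) is invertible, the operator on V obtained by restricting P∘(id + R⁻¹·S)⁻¹∘S∘P to V is invertible, and for every L ∈ H the solution r_R = (S + R·(id − P))⁻¹ L satisfies: P r_R is the unique element v ∈ V such that P((id + R⁻¹·S)⁻¹(S v)) = P((id + R⁻¹·S)⁻¹ L) (equation (17), the large-R representation of the additive part of the penalized estimator). -/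
/-!
Both operators have the form `S₁ + c • S₂` with `S₁, S₂` positive, `c > 0` and
`ker S₁ ⊓ ker S₂ = ⊥`, hence are injective. With `T = 1 + R⁻¹ • S` one has the identity
`S + R • (1 - P) = S * P + R • (T * (1 - P))`, so `P * T⁻¹ * (S + R • (1 - P)) = P * T⁻¹ * S * P`;
applied to `r_R` this is equation (17) for `v = P r_R`. Conversely, if `v ∈ V` and
`P (T⁻¹ (S v)) = 0`, then `S + R • (1 - P)` kills `v - R⁻¹ • T⁻¹ (S v)`, which forces `v = 0`.
-/

open scoped RealInnerProductSpace

namespace LinearMap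

variable {H : Type*} [NormedAddCommGroup H] [InnerProductSpace ℝ H]

theorem IsPositive.apply_eq_zero_of_inner_self_eq_zero {S : H →ₗ[ℝ] H} (hS : S.IsPositive)
    {x : H} (hx : ⟪x, S x⟫ = 0) : S x = 0 := by
  -- the quadratic `t ↦ ⟪x + t • S x, S (x + t • S x)⟫` is nonnegative with linear coefficient
  -- `2 ‖S x‖²`, so its discriminant `4 ‖S x‖⁴` cannot be positive
  have hq : ∀ t : ℝ, 0 ≤ ⟪S x, S (S x)⟫ * (t * t) + 2 * ‖S x‖ ^ 2 * t + 0 := by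
    intro t
    have h := hS.inner_nonneg_right (x + t • S x)
    simp only [map_add, map_smul, inner_add_left, inner_add_right, real_inner_smul_left,
      real_inner_smul_right, hx, ← hS.isSymmetric x (S x), real_inner_self_eq_norm_sq] at h
    linarith
  have hd := discrim_le_zero hq
  rw [discrim] at hd
  have : ‖S x‖ ^ 2 = 0 := by nlinarith [sq_nonneg (‖S x‖ ^ 2)]
  simpa using this

theorem IsPositive.isUnit_add_smul [FiniteDimensional ℝ H] {S Q : H →ₗ[ℝ] H}
    (hS : S.IsPositive) (hQ : Q.IsPositive) {c : ℝ} (hc : 0 < c) (hker : ker S ⊓ ker Q = ⊥) :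
    IsUnit (S + c • Q) := by
  rw [isUnit_iff_ker_eq_bot, eq_bot_iff]
  intro x hx
  have hsum : ⟪x, S x⟫ + c * ⟪x, Q x⟫ = 0 := by
    simpa [inner_add_right, real_inner_smul_right] using congrArg (⟪x, ·⟫) (mem_ker.1 hx)
  have hSx := hS.inner_nonneg_right x
  have hQx := mul_nonneg hc.le (hQ.inner_nonneg_right x)
  rw [← hker]
  exact ⟨hS.apply_eq_zero_of_inner_self_eq_zero (by linarith),
    hQ.apply_eq_zero_of_inner_self_eq_zero (by nlinarith)⟩

end LinearMap

namespace Submodule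

variable {H : Type*} [NormedAddCommGroup H] [InnerProductSpace ℝ H] (V : Submodule ℝ H)
  [V.HasOrthogonalProjection]

theorem isPositive_one_sub_starProjection : (1 - (V.starProjection : H →ₗ[ℝ] H)).IsPositive := by
  have := Vᗮ.isSymmetricProjection_starProjection.isPositive
  rwa [starProjection_orthogonal', ContinuousLinearMap.toLinearMap_sub,
    ContinuousLinearMap.toLinearMap_one] at this

theorem ker_one_sub_starProjection : LinearMap.ker (1 - (V.starProjection : H →ₗ[ℝ] H)) = V := by
  ext x
  rw [LinearMap.mem_ker, LinearMap.sub_apply, Module.End.one_apply, sub_eq_zero, eq_comm]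
  exact starProjection_eq_self_iff

end Submodule

namespace Module.End

variable {K M : Type*} [Field K] [AddCommGroup M] [Module K M] {S P : Module.End K M} {R : K}

theorem add_smul_one_sub_eq_mul_add (hR : R ≠ 0) :
    S + R • (1 - P) = S * P + R • ((1 + R⁻¹ • S) * (1 - P)) := by
  rw [add_mul, one_mul, smul_add, smul_mul_assoc, smul_smul, mul_inv_cancel₀ hR, one_smul]
  noncomm_ring

theorem inverse_apply_apply {T : Module.End K M} (hT : IsUnit T) (x : M) :
    Ring.inverse T (T x) = x := by
  rw [← mul_apply, Ring.inverse_mul_cancel T hT, one_apply]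

theorem apply_inverse_apply {T : Module.End K M} (hT : IsUnit T) (x : M) :
    T (Ring.inverse T x) = x := by
  rw [← mul_apply, Ring.mul_inverse_cancel T hT, one_apply]

variable (hR : R ≠ 0) (hT : IsUnit (1 + R⁻¹ • S)) (hA : IsUnit (S + R • (1 - P)))
include hR hT hA

theorem mul_inverse_one_add_smul_eq (hP : IsIdempotentElem P) :
    P * Ring.inverse (1 + R⁻¹ • S) =
      P * Ring.inverse (1 + R⁻¹ • S) * S * P * Ring.inverse (S + R • (1 - P)) := by
  have hcomp : P * Ring.inverse (1 + R⁻¹ • S) * (S + R • (1 - P)) =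
      P * Ring.inverse (1 + R⁻¹ • S) * S * P :=
    calc P * Ring.inverse (1 + R⁻¹ • S) * (S + R • (1 - P))
        = P * Ring.inverse (1 + R⁻¹ • S) * S * P +
            R • (P * (Ring.inverse (1 + R⁻¹ • S) * (1 + R⁻¹ • S)) * (1 - P)) := by
          rw [add_smul_one_sub_eq_mul_add hR, mul_add, mul_smul_comm]
          simp only [mul_assoc]
      _ = P * Ring.inverse (1 + R⁻¹ • S) * S * P := by
          rw [Ring.inverse_mul_cancel _ hT, mul_one, mul_one_sub, hP.eq, sub_self, smul_zero,
            add_zero]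
  rw [← hcomp, mul_assoc _ (S + _), Ring.mul_inverse_cancel _ hA, mul_one]

theorem eq_zero_of_apply_inverse_apply_eq_zero {v : M} (hv : P v = v)
    (h : P (Ring.inverse (1 + R⁻¹ • S) (S v)) = 0) : v = 0 := by
  set u := Ring.inverse (1 + R⁻¹ • S) (S v)
  have hx : (S + R • (1 - P)) (v - R⁻¹ • u) = 0 := by
    have hPx : P (v - R⁻¹ • u) = v := by rw [map_sub, map_smul, hv, h, smul_zero, sub_zero]
    rw [add_smul_one_sub_eq_mul_add hR, LinearMap.add_apply, mul_apply, hPx,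
      LinearMap.smul_apply, mul_apply, LinearMap.sub_apply, one_apply, hPx, sub_sub_cancel_left,
      map_neg, map_smul, smul_neg, smul_smul, mul_inv_cancel₀ hR, one_smul,
      apply_inverse_apply hT, add_neg_cancel]
  have hvu : v = R⁻¹ • u := sub_eq_zero.1 <| (Module.End.isUnit_iff _).1 hA |>.1 <| by
    rw [hx, map_zero]
  rw [← hv, hvu, map_smul, h, smul_zero]

theorem apply_inverse_apply_eq_iff (hP : IsIdempotentElem P) {v : M} (hv : P v = v) (L : M) :
    P (Ring.inverse (1 + R⁻¹ • S) (S v)) = P (Ring.inverse (1 + R⁻¹ • S) L) ↔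
      v = P (Ring.inverse (S + R • (1 - P)) L) := by
  have key : P (Ring.inverse (1 + R⁻¹ • S) L) =
      P (Ring.inverse (1 + R⁻¹ • S) (S (P (Ring.inverse (S + R • (1 - P)) L)))) :=
    congr($(mul_inverse_one_add_smul_eq hR hT hA hP) L)
  refine ⟨fun h => sub_eq_zero.1 ?_, fun h => h ▸ key.symm⟩
  refine eq_zero_of_apply_inverse_apply_eq_zero hR hT hA ?_ ?_
  · rw [map_sub, hv, ← mul_apply, hP.eq]
  · rw [map_sub, map_sub, map_sub, h, ← key, sub_self]

end Module.End

/-- equation (17), large-`R` representation of the additive part: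
assume `S x = 0` and `x ∈ V` imply `x = 0`.  Then for every `R > 0` the operator
`S + R·(id − P)` is invertible, the operator on `V` obtained by restricting
`P∘(id + R⁻¹·S)⁻¹∘S∘P` to `V` is invertible, and for every `L ∈ H` the solution
`r_R = (S + R·(id − P))⁻¹ L` satisfies: `P r_R` is the unique `v ∈ V` such that
`P((id + R⁻¹·S)⁻¹(S v)) = P((id + R⁻¹·S)⁻¹ L)`. -/
theorem equation17_additive_part
    {H : Type*} [NormedAddCommGroup H] [InnerProductSpace ℝ H] [FiniteDimensional ℝ H]
    (S : Module.End ℝ H)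
    (hS_sym : ∀ x y : H, ⟪S x, y⟫ = ⟪x, S y⟫)
    (hS_psd : ∀ x : H, 0 ≤ ⟪x, S x⟫)
    (V : Submodule ℝ H)
    (P : Module.End ℝ H) (hP : ∀ x : H, P x = (V.orthogonalProjectionOnto x : H))
    (hker : ∀ x : H, S x = 0 → x ∈ V → x = 0) :
    ∀ R : ℝ, 0 < R →
      IsUnit (S + R • (1 - P)) ∧
      IsUnit ((1 : Module.End ℝ H) + R⁻¹ • S) ∧
      (∀ w ∈ V, ∃! v : H, v ∈ V ∧
        P (Ring.inverse ((1 : Module.End ℝ H) + R⁻¹ • S) (S v)) = w) ∧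
      ∀ L : H, ∀ v : H,
        (v ∈ V ∧
            P (Ring.inverse ((1 : Module.End ℝ H) + R⁻¹ • S) (S v)) =
              P (Ring.inverse ((1 : Module.End ℝ H) + R⁻¹ • S) L)) ↔
          v = P (Ring.inverse (S + R • (1 - P)) L) := by
  obtain rfl : P = V.starProjection := LinearMap.ext hP
  intro R hR
  have hS : S.IsPositive :=
    S.isPositive_iff.2 ⟨hS_sym, fun x => real_inner_comm x (S x) ▸ hS_psd x⟩
  have hT : IsUnit (1 + R⁻¹ • S) :=
    LinearMap.isPositive_one.isUnit_add_smul hS (inv_pos.2 hR) (bot_unique fun x hx => hx.1)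
  have hA : IsUnit (S + R • (1 - V.starProjection)) :=
    hS.isUnit_add_smul V.isPositive_one_sub_starProjection hR <| by
      rw [V.ker_one_sub_starProjection, eq_bot_iff]
      exact fun x ⟨hSx, hx⟩ => hker x hSx hx
  have hsolve (L v : H) (hv : v ∈ V) := Module.End.apply_inverse_apply_eq_iff hR.ne' hT hA
    V.isSymmetricProjection_starProjection.isIdempotentElem (V.starProjection_eq_self_iff.2 hv) L
  refine ⟨hA, hT, fun w hw => ?_, fun L v => ⟨fun ⟨hv, h⟩ => (hsolve L v hv).1 h, ?_⟩⟩
  · have hTw : V.starProjection (Ring.inverse (1 + R⁻¹ • S) ((1 + R⁻¹ • S) w)) = w := by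
      rw [Module.End.inverse_apply_apply hT, V.starProjection_eq_self_iff.2 hw]
    have hv := V.starProjection_apply_mem (Ring.inverse (S + R • (1 - V.starProjection))
      ((1 + R⁻¹ • S) w))
    exact ⟨_, ⟨hv, ((hsolve _ _ hv).2 rfl).trans hTw⟩,
      fun v ⟨hv', h⟩ => (hsolve _ v hv').1 (h.trans hTw.symm)⟩
  · rintro rfl
    have hv := V.starProjection_apply_mem (Ring.inverse (S + R • (1 - V.starProjection)) L)
    exact ⟨hv, (hsolve L _ hv).2 rfl⟩
end

section
/- If r_R ∈ W minimizes r ↦ ‖y − r‖_R² over W and r_add ∈ V minimizes v ↦ ‖y − v‖_*² over V, then R·‖Q r_R‖² ≤ 2·‖r_R − r_add‖_*·‖y − r_add‖_*, and hence ‖Q r_R‖² ≤ 2·R⁻¹·√‖S‖·‖y − r_add‖_*·‖r_R − r_add‖, where ‖S‖ is the operator norm of S (Lemma 4: bound on the non-additive part of the penalized estimator). -/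
open scoped RealInnerProductSpace

/-!
Comparing the penalized objective at `r_R` with its value at `r_add ∈ V ⊆ W`, where the penalty
vanishes because `Q r_add = Q y = 0`, gives `R‖Q r_R‖² ≤ ‖y - r_add‖_*² - ‖y - r_R‖_*²`. Writing
`y - r_R = (y - r_add) - (r_R - r_add)`, the right side is at most
`2⟪y - r_add, S (r_R - r_add)⟫`, which Cauchy–Schwarz for the semi-inner product `⟪·, S ·⟫`
bounds by `2‖r_R - r_add‖_*‖y - r_add‖_*`; the second inequality follows from
`‖u‖_*² ≤ ‖S‖‖u‖²`.
-/

namespace ContinuousLinearMap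

variable {H : Type*} [NormedAddCommGroup H] [InnerProductSpace ℝ H] {S : H →L[ℝ] H}

theorem IsPositive.inner_map_symm (hS : S.IsPositive) (x y : H) : ⟪x, S y⟫ = ⟪y, S x⟫ := by
  rw [← hS.inner_left_eq_inner_right, real_inner_comm]

theorem IsPositive.inner_map_le_sqrt_mul_sqrt (hS : S.IsPositive) (x y : H) :
    ⟪x, S y⟫ ≤ √⟪x, S x⟫ * √⟪y, S y⟫ := by
  have hsq : ⟪x, S y⟫ ^ 2 ≤ ⟪x, S x⟫ * ⟪y, S y⟫ := by
    rw [sq]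
    nth_rw 2 [hS.inner_map_symm]
    simpa using LinearMap.BilinForm.apply_mul_apply_le_of_forall_zero_le
      ((innerₗ H).compl₂ (S : H →ₗ[ℝ] H)) (by simpa using hS.inner_nonneg_right) x y
  rw [← Real.sqrt_mul (hS.inner_nonneg_right x)]
  exact (le_abs_self _).trans (Real.abs_le_sqrt hsq)

theorem sqrt_inner_map_self_le (S : H →L[ℝ] H) (x : H) : √⟪x, S x⟫ ≤ √‖S‖ * ‖x‖ := by
  have h : ⟪x, S x⟫ ≤ ‖S‖ * ‖x‖ ^ 2 :=
    calc ⟪x, S x⟫ ≤ ‖x‖ * ‖S x‖ := real_inner_le_norm x (S x)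
      _ ≤ ‖x‖ * (‖S‖ * ‖x‖) := by gcongr; exact S.le_opNorm x
      _ = ‖S‖ * ‖x‖ ^ 2 := by ring
  calc √⟪x, S x⟫ ≤ √(‖S‖ * ‖x‖ ^ 2) := Real.sqrt_le_sqrt h
    _ = √‖S‖ * ‖x‖ := by rw [Real.sqrt_mul (norm_nonneg S), Real.sqrt_sq (norm_nonneg x)]

theorem IsPositive.inner_map_self_sub_inner_map_self_sub_le (hS : S.IsPositive) (x y : H) :
    ⟪x, S x⟫ - ⟪x - y, S (x - y)⟫ ≤ 2 * √⟪y, S y⟫ * √⟪x, S x⟫ := by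
  have hexpand : ⟪x, S x⟫ - ⟪x - y, S (x - y)⟫ = 2 * ⟪x, S y⟫ - ⟪y, S y⟫ := by
    simp only [map_sub, inner_sub_left, inner_sub_right, hS.inner_map_symm y x]
    ring
  rw [hexpand]
  linarith [hS.inner_map_le_sqrt_mul_sqrt x y, hS.inner_nonneg_right y]

end ContinuousLinearMap

theorem lemma4_nonadditive_part_bound_general
    {H : Type*} [NormedAddCommGroup H] [InnerProductSpace ℝ H]
    (S : H →L[ℝ] H)
    (hS_sym : ∀ x y : H, ⟪S x, y⟫ = ⟪x, S y⟫)
    (hS_psd : ∀ x : H, 0 ≤ ⟪x, S x⟫)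
    (Q : H →L[ℝ] H)
    (W : Submodule ℝ H) (V : Submodule ℝ H) (hVW : V ≤ W)
    (hQV : ∀ v ∈ V, Q v = 0)
    (R : ℝ) (hR : 0 < R)
    (y : H) (hQy : Q y = 0)
    (r_R : H)
    (hrR_min : ∀ r ∈ W,
      ⟪y - r_R, S (y - r_R)⟫ + R * ‖Q (y - r_R)‖ ^ 2 ≤
        ⟪y - r, S (y - r)⟫ + R * ‖Q (y - r)‖ ^ 2)
    (r_add : H) (hra_mem : r_add ∈ V) :
    R * ‖Q r_R‖ ^ 2 ≤
        2 * Real.sqrt ⟪r_R - r_add, S (r_R - r_add)⟫ *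
          Real.sqrt ⟪y - r_add, S (y - r_add)⟫ ∧
      ‖Q r_R‖ ^ 2 ≤
        2 * R⁻¹ * Real.sqrt ‖S‖ * Real.sqrt ⟪y - r_add, S (y - r_add)⟫ *
          ‖r_R - r_add‖ := by
  have hS : S.IsPositive := ⟨hS_sym, fun x => by
    simpa [ContinuousLinearMap.reApplyInnerSelf, real_inner_comm] using hS_psd x⟩
  have hpenalty : R * ‖Q r_R‖ ^ 2 ≤ ⟪y - r_add, S (y - r_add)⟫ - ⟪y - r_R, S (y - r_R)⟫ := by
    have h := hrR_min r_add (hVW hra_mem)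
    rw [map_sub Q, map_sub Q, hQy, hQV r_add hra_mem, zero_sub, norm_neg, sub_zero, norm_zero] at h
    linarith
  have hfirst : R * ‖Q r_R‖ ^ 2 ≤
      2 * √⟪r_R - r_add, S (r_R - r_add)⟫ * √⟪y - r_add, S (y - r_add)⟫ := by
    have h := hS.inner_map_self_sub_inner_map_self_sub_le (y - r_add) (r_R - r_add)
    rw [sub_sub_sub_cancel_right] at h
    linarith
  refine ⟨hfirst, ?_⟩
  calc ‖Q r_R‖ ^ 2 = R⁻¹ * (R * ‖Q r_R‖ ^ 2) := by field_simp
    _ ≤ R⁻¹ * (2 * √⟪r_R - r_add, S (r_R - r_add)⟫ * √⟪y - r_add, S (y - r_add)⟫) := by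
      gcongr
    _ ≤ R⁻¹ * (2 * (√‖S‖ * ‖r_R - r_add‖) * √⟪y - r_add, S (y - r_add)⟫) := by
      gcongr; exact S.sqrt_inner_map_self_le _
    _ = 2 * R⁻¹ * √‖S‖ * √⟪y - r_add, S (y - r_add)⟫ * ‖r_R - r_add‖ := by ring

/-- Lemma 4: bound on the non-additive part of the penalized
estimator: with `‖u‖_*² = ⟪u, S u⟫` and `‖u‖_R² = ‖u‖_*² + R·‖Q u‖²`, if
`r_R ∈ W` minimizes `r ↦ ‖y − r‖_R²` over `W` and `r_add ∈ V` minimizes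
`v ↦ ‖y − v‖_*²` over `V`, then
`R·‖Q r_R‖² ≤ 2·‖r_R − r_add‖_*·‖y − r_add‖_*`, and hence
`‖Q r_R‖² ≤ 2·R⁻¹·√‖S‖·‖y − r_add‖_*·‖r_R − r_add‖`. -/
theorem lemma4_nonadditive_part_bound
    {H : Type*} [NormedAddCommGroup H] [InnerProductSpace ℝ H] [FiniteDimensional ℝ H]
    (S : H →L[ℝ] H)
    (hS_sym : ∀ x y : H, ⟪S x, y⟫ = ⟪x, S y⟫)
    (hS_psd : ∀ x : H, 0 ≤ ⟪x, S x⟫)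
    (Q : H →L[ℝ] H)
    (hQ_idem : Q * Q = Q)
    (hQ_sym : ∀ x y : H, ⟪Q x, y⟫ = ⟪x, Q y⟫)
    (W : Submodule ℝ H) (V : Submodule ℝ H) (hVW : V ≤ W)
    (hQV : ∀ v ∈ V, Q v = 0)
    (R : ℝ) (hR : 0 < R)
    (y : H) (hQy : Q y = 0)
    (r_R : H) (hrR_mem : r_R ∈ W)
    (hrR_min : ∀ r ∈ W,
      ⟪y - r_R, S (y - r_R)⟫ + R * ‖Q (y - r_R)‖ ^ 2 ≤
        ⟪y - r, S (y - r)⟫ + R * ‖Q (y - r)‖ ^ 2)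
    (r_add : H) (hra_mem : r_add ∈ V)
    (hra_min : ∀ v ∈ V, ⟪y - r_add, S (y - r_add)⟫ ≤ ⟪y - v, S (y - v)⟫) :
    R * ‖Q r_R‖ ^ 2 ≤
        2 * Real.sqrt ⟪r_R - r_add, S (r_R - r_add)⟫ *
          Real.sqrt ⟪y - r_add, S (y - r_add)⟫ ∧
      ‖Q r_R‖ ^ 2 ≤
        2 * R⁻¹ * Real.sqrt ‖S‖ * Real.sqrt ⟪y - r_add, S (y - r_add)⟫ *
          ‖r_R - r_add‖ :=
  lemma4_nonadditive_part_bound_general S hS_sym hS_psd Q W V hVW hQV R hR y hQy r_R hrR_min r_add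
    hra_mem
end

section
/- Assume additionally ⟨v, S v⟩ > 0 for every nonzero v ∈ V. If r_R ∈ W minimizes r ↦ ‖y − r‖_R² over W and r_add ∈ V minimizes v ↦ ‖y − v‖_*² over V (r_add is unique by the positivity assumption), then r_add is the unique minimizer over v ∈ V of ‖r_R − v‖_*²; that is, the ‖·‖_*-orthogonal projection of the penalized estimator r_R onto V equals r_add, independently of R (Proposition 4: P_* r̂_R = r̂_add). -/
/-!
Both minimizers satisfy first-order conditions in the directions of `V`: the residuals
`y - r_R` and `y - r_add` are `S`-orthogonal to `V` (moving `r_R` along `V` does not change the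
penalty, since `Q` kills `V`). Hence `r_R - r_add` is `S`-orthogonal to `V`, and Pythagoras for the
form `⟪·, S ·⟫` gives `‖r_R - v‖_*² = ‖r_R - r_add‖_*² + ‖r_add - v‖_*²` for `v ∈ V`.
-/

open scoped RealInnerProductSpace

namespace LinearMap.IsSymmetric

variable {H : Type*} [NormedAddCommGroup H] [InnerProductSpace ℝ H] {T : H →ₗ[ℝ] H}

theorem inner_map_sub_smul_self (hT : T.IsSymmetric) (a v : H) (t : ℝ) :
    ⟪a - t • v, T (a - t • v)⟫ = ⟪v, T v⟫ * t * t + (-2 * ⟪a, T v⟫) * t + ⟪a, T a⟫ := by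
  have hvTa : ⟪v, T a⟫ = ⟪a, T v⟫ := by rw [← hT, real_inner_comm]
  simp only [map_sub, map_smul, inner_sub_left, inner_sub_right, real_inner_smul_left,
    real_inner_smul_right, hvTa]
  ring

theorem inner_map_eq_zero_of_forall_le (hT : T.IsSymmetric) {a v : H}
    (h : ∀ t : ℝ, ⟪a, T a⟫ ≤ ⟪a - t • v, T (a - t • v)⟫) : ⟪a, T v⟫ = 0 := by
  have hdiscr := discrim_le_zero (a := ⟪v, T v⟫) (b := -2 * ⟪a, T v⟫) (c := 0) fun t => by
    linarith [h t, hT.inner_map_sub_smul_self a v t]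
  rw [discrim] at hdiscr
  nlinarith [sq_nonneg ⟪a, T v⟫]

theorem inner_map_add_self_of_inner_map_eq_zero (hT : T.IsSymmetric) {a b : H}
    (h : ⟪a, T b⟫ = 0) : ⟪a + b, T (a + b)⟫ = ⟪a, T a⟫ + ⟪b, T b⟫ := by
  have hbTa : ⟪b, T a⟫ = 0 := by rw [← hT, real_inner_comm, h]
  simp only [map_add, inner_add_left, inner_add_right, h, hbTa]
  ring

theorem inner_map_sub_self_eq_add (hT : T.IsSymmetric) {K : Submodule ℝ H} {x a : H}
    (ha : a ∈ K) (horth : ∀ v ∈ K, ⟪x - a, T v⟫ = 0) {v : H} (hv : v ∈ K) :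
    ⟪x - v, T (x - v)⟫ = ⟪x - a, T (x - a)⟫ + ⟪a - v, T (a - v)⟫ := by
  rw [← hT.inner_map_add_self_of_inner_map_eq_zero (horth _ (K.sub_mem ha hv)),
    sub_add_sub_cancel]

end LinearMap.IsSymmetric

theorem proposition4_additive_part_general
    {H : Type*} [NormedAddCommGroup H] [InnerProductSpace ℝ H]
    (S : H →L[ℝ] H)
    (hS_sym : ∀ x y : H, ⟪S x, y⟫ = ⟪x, S y⟫)
    (hS_psd : ∀ x : H, 0 ≤ ⟪x, S x⟫)
    (Q : H →L[ℝ] H)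
    (W : Submodule ℝ H) (V : Submodule ℝ H) (hVW : V ≤ W)
    (hQV : ∀ v ∈ V, Q v = 0)
    (R : ℝ)
    (y : H)
    (hS_posV : ∀ v ∈ V, v ≠ 0 → 0 < ⟪v, S v⟫)
    (r_R : H) (hrR_mem : r_R ∈ W)
    (hrR_min : ∀ r ∈ W,
      ⟪y - r_R, S (y - r_R)⟫ + R * ‖Q (y - r_R)‖ ^ 2 ≤
        ⟪y - r, S (y - r)⟫ + R * ‖Q (y - r)‖ ^ 2)
    (r_add : H) (hra_mem : r_add ∈ V)
    (hra_min : ∀ v ∈ V, ⟪y - r_add, S (y - r_add)⟫ ≤ ⟪y - v, S (y - v)⟫) :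
    (∀ v ∈ V, ⟪r_R - r_add, S (r_R - r_add)⟫ ≤ ⟪r_R - v, S (r_R - v)⟫) ∧
      ∀ v ∈ V, ⟪r_R - v, S (r_R - v)⟫ = ⟪r_R - r_add, S (r_R - r_add)⟫ →
        v = r_add := by
  have hS : (S : H →ₗ[ℝ] H).IsSymmetric := hS_sym
  have horth_R : ∀ v ∈ V, ⟪y - r_R, S v⟫ = 0 := fun v hv =>
    hS.inner_map_eq_zero_of_forall_le fun t => by
      have h := hrR_min (r_R + t • v) (W.add_mem hrR_mem (W.smul_mem t (hVW hv)))
      rwa [← sub_sub, map_sub (f := Q) _ (t • v), map_smul, hQV v hv, smul_zero, sub_zero,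
        add_le_add_iff_right] at h
  have horth_add : ∀ v ∈ V, ⟪y - r_add, S v⟫ = 0 := fun v hv =>
    hS.inner_map_eq_zero_of_forall_le fun t => by
      have h := hra_min (r_add + t • v) (V.add_mem hra_mem (V.smul_mem t hv))
      rwa [← sub_sub] at h
  have horth : ∀ v ∈ V, ⟪r_R - r_add, S v⟫ = 0 := fun v hv => by
    rw [← sub_sub_sub_cancel_left r_add r_R y, inner_sub_left, horth_R v hv, horth_add v hv,
      sub_zero]
  have hpyth : ∀ v ∈ V,
      ⟪r_R - v, S (r_R - v)⟫ = ⟪r_R - r_add, S (r_R - r_add)⟫ + ⟪r_add - v, S (r_add - v)⟫ :=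
    fun v hv => hS.inner_map_sub_self_eq_add hra_mem horth hv
  refine ⟨fun v hv => ?_, fun v hv heq => ?_⟩
  · linarith [hpyth v hv, hS_psd (r_add - v)]
  · by_contra hne
    linarith [hpyth v hv, hS_posV _ (V.sub_mem hra_mem hv) (sub_ne_zero.mpr (Ne.symm hne))]

/-- Proposition 4: `P_* r̂_R = r̂_add`: assume additionally
`⟪v, S v⟫ > 0` for every nonzero `v ∈ V`.  If `r_R ∈ W` minimizes
`r ↦ ‖y − r‖_R²` over `W` and `r_add ∈ V` minimizes `v ↦ ‖y − v‖_*²` over `V`,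
then `r_add` is the unique minimizer over `v ∈ V` of `‖r_R − v‖_*²`; that is,
the `‖·‖_*`-orthogonal projection of `r_R` onto `V` equals `r_add`,
independently of `R`. -/
theorem proposition4_additive_part
    {H : Type*} [NormedAddCommGroup H] [InnerProductSpace ℝ H] [FiniteDimensional ℝ H]
    (S : H →L[ℝ] H)
    (hS_sym : ∀ x y : H, ⟪S x, y⟫ = ⟪x, S y⟫)
    (hS_psd : ∀ x : H, 0 ≤ ⟪x, S x⟫)
    (Q : H →L[ℝ] H)
    (hQ_idem : Q * Q = Q)
    (hQ_sym : ∀ x y : H, ⟪Q x, y⟫ = ⟪x, Q y⟫)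
    (W : Submodule ℝ H) (V : Submodule ℝ H) (hVW : V ≤ W)
    (hQV : ∀ v ∈ V, Q v = 0)
    (R : ℝ) (hR : 0 < R)
    (y : H) (hQy : Q y = 0)
    (hS_posV : ∀ v ∈ V, v ≠ 0 → 0 < ⟪v, S v⟫)
    (r_R : H) (hrR_mem : r_R ∈ W)
    (hrR_min : ∀ r ∈ W,
      ⟪y - r_R, S (y - r_R)⟫ + R * ‖Q (y - r_R)‖ ^ 2 ≤
        ⟪y - r, S (y - r)⟫ + R * ‖Q (y - r)‖ ^ 2)
    (r_add : H) (hra_mem : r_add ∈ V)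
    (hra_min : ∀ v ∈ V, ⟪y - r_add, S (y - r_add)⟫ ≤ ⟪y - v, S (y - v)⟫) :
    (∀ v ∈ V, ⟪r_R - r_add, S (r_R - r_add)⟫ ≤ ⟪r_R - v, S (r_R - v)⟫) ∧
      ∀ v ∈ V, ⟪r_R - v, S (r_R - v)⟫ = ⟪r_R - r_add, S (r_R - r_add)⟫ →
        v = r_add :=
  proposition4_additive_part_general S hS_sym hS_psd Q W V hVW hQV R y hS_posV r_R hrR_mem hrR_min
    r_add hra_mem hra_min
end

section
/- For every n×n real matrix M, E[‖M ε‖²] = σ²·tr(Mᵀ·M) and Var(‖M ε‖²) ≤ (2 + |κ|)·σ²·‖Mᵀ·M‖_op·E[‖M ε‖²], where ‖·‖_op denotes the operator (spectral) norm (second part of Lemma 5). -/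
/-!
Write `‖M ε‖² = εᵀ A ε` with `A = Mᵀ M`. Independence and centring give `E[εᵢ εⱼ] = σ² δᵢⱼ` and
`E[εᵢ εⱼ εₖ εₗ] = σ⁴ (δᵢⱼ δₖₗ + δᵢₖ δⱼₗ + δᵢₗ δⱼₖ) + κ σ⁴ δᵢⱼ δⱼₖ δₖₗ`, since a moment in which
some index occurs only once vanishes. Hence `E[εᵀ A ε] = σ² tr A` and, by bilinearity of the
covariance, `Var(εᵀ A ε) = 2 σ⁴ ∑ᵢⱼ Aᵢⱼ² + κ σ⁴ ∑ᵢ Aᵢᵢ²` for symmetric `A`. Finally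
`∑ᵢ Aᵢᵢ² ≤ ∑ᵢⱼ Aᵢⱼ² = ∑ⱼ ‖A eⱼ‖² ≤ ‖A‖ ∑ⱼ ‖M eⱼ‖² = ‖A‖ tr A`, because `A = M* M` gives
`‖A x‖ ≤ ‖M‖ ‖M x‖` and `‖M‖² = ‖A‖`.
-/

open Matrix MeasureTheory ProbabilityTheory

instance ENNReal.HolderTriple.instFourFourTwo : ENNReal.HolderTriple 4 4 2 where
  inv_add_inv_eq_inv := by
    rw [← two_mul, show (4 : ENNReal) = 2 * 2 by norm_num, ENNReal.mul_inv (by simp) (by simp),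
      ← mul_assoc, ENNReal.mul_inv_cancel (by simp) (by simp), one_mul]

lemma MeasureTheory.memLp_four_of_integrable_pow {Ω : Type*} [MeasurableSpace Ω] {μ : Measure Ω}
    {f : Ω → ℝ} (hf : AEStronglyMeasurable f μ) (h : Integrable (fun ω => f ω ^ 4) μ) :
    MemLp f 4 μ := by
  rw [← integrable_norm_rpow_iff hf (by norm_num) (by norm_num)]
  have h4 : (4 : ENNReal).toReal = ((4 : ℕ) : ℝ) := by norm_num
  simp only [h4, Real.rpow_natCast, Real.norm_eq_abs, pow_abs]
  exact h.abs

lemma ContinuousLinearMap.norm_adjoint_comp_self_apply_sq_le {𝕜 E F : Type*} [RCLike 𝕜]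
    [NormedAddCommGroup E] [InnerProductSpace 𝕜 E] [CompleteSpace E]
    [NormedAddCommGroup F] [InnerProductSpace 𝕜 F] [CompleteSpace F] (T : E →L[𝕜] F) (x : E) :
    ‖(adjoint T ∘L T) x‖ ^ 2 ≤ ‖adjoint T ∘L T‖ * ‖T x‖ ^ 2 := by
  rw [norm_adjoint_comp_self, comp_apply]
  calc ‖adjoint T (T x)‖ ^ 2 ≤ (‖adjoint T‖ * ‖T x‖) ^ 2 := by gcongr; exact le_opNorm _ _
    _ = ‖T‖ * ‖T‖ * ‖T x‖ ^ 2 := by rw [LinearIsometryEquiv.norm_map]; ring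

namespace Matrix

variable {ι : Type*} [Fintype ι]

lemma dotProduct_mulVec_eq_sum (A : Matrix ι ι ℝ) (x : ι → ℝ) :
    x ⬝ᵥ A *ᵥ x = ∑ p : ι × ι, A p.1 p.2 * (x p.1 * x p.2) := by
  simp only [dotProduct, mulVec, Finset.mul_sum, Fintype.sum_prod_type]
  exact Finset.sum_congr rfl fun i _ => Finset.sum_congr rfl fun j _ => by ring

lemma mulVec_dotProduct_mulVec_self (M : Matrix ι ι ℝ) (x : ι → ℝ) :
    M *ᵥ x ⬝ᵥ M *ᵥ x = x ⬝ᵥ (Mᵀ * M) *ᵥ x := by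
  rw [← mulVec_mulVec, dotProduct_mulVec x Mᵀ, vecMul_transpose]

lemma sum_sq_diag_le_sum_sq (A : Matrix ι ι ℝ) : ∑ i, A i i ^ 2 ≤ ∑ i, ∑ j, A i j ^ 2 :=
  Finset.sum_le_sum fun i _ => Finset.single_le_sum (f := fun j => A i j ^ 2)
    (fun _ _ => sq_nonneg _) (Finset.mem_univ i)

variable [DecidableEq ι]

lemma toEuclideanCLM_transpose_mul_self (M : Matrix ι ι ℝ) :
    toEuclideanCLM (𝕜 := ℝ) (Mᵀ * M) =
      ContinuousLinearMap.adjoint (toEuclideanCLM (𝕜 := ℝ) M) ∘L toEuclideanCLM (𝕜 := ℝ) M := by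
  rw [map_mul, ← conjTranspose_eq_transpose_of_trivial, ← star_eq_conjTranspose, map_star,
    ContinuousLinearMap.star_eq_adjoint]
  rfl

lemma norm_toEuclideanCLM_single_sq (M : Matrix ι ι ℝ) (j : ι) :
    ‖toEuclideanCLM (𝕜 := ℝ) M (EuclideanSpace.single j 1)‖ ^ 2 = ∑ i, M i j ^ 2 := by
  rw [EuclideanSpace.real_norm_sq_eq]
  simp [EuclideanSpace.single]

lemma sum_sq_transpose_mul_self_le (M : Matrix ι ι ℝ) :
    ∑ i, ∑ j, (Mᵀ * M) i j ^ 2 ≤ ‖toEuclideanCLM (𝕜 := ℝ) (Mᵀ * M)‖ * (Mᵀ * M).trace := by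
  rw [Finset.sum_comm, trace, Finset.mul_sum]
  refine Finset.sum_le_sum fun j _ => ?_
  have h := (toEuclideanCLM (𝕜 := ℝ) M).norm_adjoint_comp_self_apply_sq_le
    (EuclideanSpace.single j 1)
  rw [← toEuclideanCLM_transpose_mul_self, norm_toEuclideanCLM_single_sq,
    norm_toEuclideanCLM_single_sq] at h
  refine h.trans_eq ?_
  simp [mul_apply, sq]

end Matrix

namespace ProbabilityTheory

variable {Ω ι : Type*} [MeasurableSpace Ω] {μ : Measure Ω} {ε : ι → Ω → ℝ} {σ κ : ℝ}

lemma iIndepFun.indepFun_mul_mul_of_ne [DecidableEq ι] (hindep : iIndepFun ε μ)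
    (hmeas : ∀ i, Measurable (ε i)) {i j k l : ι} (hli : l ≠ i) (hlj : l ≠ j) (hlk : l ≠ k) :
    IndepFun (fun ω => ε i ω * ε j ω * ε k ω) (ε l) μ := by
  have hdisj : Disjoint ({i, j, k} : Finset ι) {l} := by simpa using ⟨hli, hlj, hlk⟩
  exact (hindep.indepFun_finset _ _ hdisj hmeas).comp
    (φ := fun x : ({i, j, k} : Finset ι) → ℝ => x ⟨i, by simp⟩ * x ⟨j, by simp⟩ * x ⟨k, by simp⟩)
    (ψ := fun x : ({l} : Finset ι) → ℝ => x ⟨l, by simp⟩) (by fun_prop) (by fun_prop)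

lemma integral_mul_mul_mul_self_of_ne (hindep : iIndepFun ε μ) (hmeas : ∀ i, Measurable (ε i))
    (hvar : ∀ i, ∫ ω, ε i ω ^ 2 ∂μ = σ ^ 2) {i j k : ι} (hki : k ≠ i) (hkj : k ≠ j) :
    ∫ ω, ε i ω * ε j ω * ε k ω * ε k ω ∂μ = (∫ ω, ε i ω * ε j ω ∂μ) * σ ^ 2 := by
  have h := (hindep.indepFun_prodMk hmeas i j k hki.symm hkj.symm).comp
    (φ := fun p : ℝ × ℝ => p.1 * p.2) (ψ := fun x => x ^ 2) (by fun_prop) (by fun_prop)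
  simp_rw [mul_assoc _ (ε k _), ← sq]
  exact (h.integral_fun_mul_eq_mul_integral (by fun_prop) (by fun_prop)).trans
    (congrArg _ (hvar k))

variable [DecidableEq ι]

lemma integral_mul_mul_mul_eq_zero (hindep : iIndepFun ε μ) (hmeas : ∀ i, Measurable (ε i))
    (hmean : ∀ i, ∫ ω, ε i ω ∂μ = 0) {i j k l : ι} (hli : l ≠ i) (hlj : l ≠ j) (hlk : l ≠ k) :
    ∫ ω, ε i ω * ε j ω * ε k ω * ε l ω ∂μ = 0 := by
  rw [(hindep.indepFun_mul_mul_of_ne hmeas hli hlj hlk).integral_fun_mul_eq_mul_integral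
    (by fun_prop) (hmeas l).aestronglyMeasurable, hmean, mul_zero]

lemma integral_mul_eq_ite (hindep : iIndepFun ε μ) (hmeas : ∀ i, Measurable (ε i))
    (hmean : ∀ i, ∫ ω, ε i ω ∂μ = 0) (hvar : ∀ i, ∫ ω, ε i ω ^ 2 ∂μ = σ ^ 2) (i j : ι) :
    ∫ ω, ε i ω * ε j ω ∂μ = if i = j then σ ^ 2 else 0 := by
  split_ifs with hij
  · subst hij
    simpa only [sq] using hvar i
  · rw [(hindep.indepFun hij).integral_fun_mul_eq_mul_integral (hmeas i).aestronglyMeasurable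
      (hmeas j).aestronglyMeasurable, hmean, zero_mul]

def mixedFourthMoment (σ κ : ℝ) (i j k l : ι) : ℝ :=
  σ ^ 4 * ((if i = j then 1 else 0) * (if k = l then 1 else 0) +
      (if i = k then 1 else 0) * (if j = l then 1 else 0) +
      (if i = l then 1 else 0) * (if j = k then 1 else 0)) +
    κ * σ ^ 4 * ((if i = j then 1 else 0) * (if j = k then 1 else 0) * (if k = l then 1 else 0))

section FourthMoments

variable (hindep : iIndepFun ε μ) (hmeas : ∀ i, Measurable (ε i))
  (hmean : ∀ i, ∫ ω, ε i ω ∂μ = 0) (hvar : ∀ i, ∫ ω, ε i ω ^ 2 ∂μ = σ ^ 2)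
  (hfour : ∀ i, ∫ ω, ε i ω ^ 4 ∂μ = (3 + κ) * σ ^ 4)
include hindep hmeas hmean hfour

lemma integral_mul_mul_self_mul_self_eq_mixedFourthMoment (i k : ι) :
    ∫ ω, ε i ω * ε k ω * ε k ω * ε k ω ∂μ = mixedFourthMoment σ κ i k k k := by
  by_cases hik : i = k
  · subst hik
    calc _ = ∫ ω, ε i ω ^ 4 ∂μ := by congr 1; ext ω; ring
      _ = _ := by rw [hfour i]; simp only [mixedFourthMoment, if_true]; ring
  · calc _ = ∫ ω, ε k ω * ε k ω * ε k ω * ε i ω ∂μ := by congr 1; ext ω; ring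
      _ = 0 := integral_mul_mul_mul_eq_zero hindep hmeas hmean hik hik hik
      _ = _ := by unfold mixedFourthMoment; grind

include hvar

lemma integral_mul_mul_mul_self_eq_mixedFourthMoment (i j k : ι) :
    ∫ ω, ε i ω * ε j ω * ε k ω * ε k ω ∂μ = mixedFourthMoment σ κ i j k k := by
  obtain ⟨hki, hkj⟩ | rfl | rfl : (k ≠ i ∧ k ≠ j) ∨ k = i ∨ k = j := by tauto
  · rw [integral_mul_mul_mul_self_of_ne hindep hmeas hvar hki hkj,
      integral_mul_eq_ite hindep hmeas hmean hvar]
    unfold mixedFourthMoment; grind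
  · calc _ = ∫ ω, ε j ω * ε k ω * ε k ω * ε k ω ∂μ := by congr 1; ext ω; ring
      _ = mixedFourthMoment σ κ j k k k :=
        integral_mul_mul_self_mul_self_eq_mixedFourthMoment hindep hmeas hmean hfour j k
      _ = _ := by unfold mixedFourthMoment; grind
  · exact integral_mul_mul_self_mul_self_eq_mixedFourthMoment hindep hmeas hmean hfour i k

theorem integral_mul_mul_mul_eq_mixedFourthMoment (i j k l : ι) :
    ∫ ω, ε i ω * ε j ω * ε k ω * ε l ω ∂μ = mixedFourthMoment σ κ i j k l := by
  obtain ⟨hli, hlj, hlk⟩ | rfl | rfl | rfl :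
      (l ≠ i ∧ l ≠ j ∧ l ≠ k) ∨ l = i ∨ l = j ∨ l = k := by tauto
  · rw [integral_mul_mul_mul_eq_zero hindep hmeas hmean hli hlj hlk]
    unfold mixedFourthMoment; grind
  · calc _ = ∫ ω, ε j ω * ε k ω * ε l ω * ε l ω ∂μ := by congr 1; ext ω; ring
      _ = mixedFourthMoment σ κ j k l l :=
        integral_mul_mul_mul_self_eq_mixedFourthMoment hindep hmeas hmean hvar hfour j k l
      _ = _ := by unfold mixedFourthMoment; grind
  · calc _ = ∫ ω, ε i ω * ε k ω * ε l ω * ε l ω ∂μ := by congr 1; ext ω; ring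
      _ = mixedFourthMoment σ κ i k l l :=
        integral_mul_mul_mul_self_eq_mixedFourthMoment hindep hmeas hmean hvar hfour i k l
      _ = _ := by unfold mixedFourthMoment; grind
  · exact integral_mul_mul_mul_self_eq_mixedFourthMoment hindep hmeas hmean hvar hfour i j _

end FourthMoments

section QuadraticForm

variable [IsProbabilityMeasure μ] (hindep : iIndepFun ε μ) (hmeas : ∀ i, Measurable (ε i))
  (hL4 : ∀ i, MemLp (ε i) 4 μ) (hmean : ∀ i, ∫ ω, ε i ω ∂μ = 0)
  (hvar : ∀ i, ∫ ω, ε i ω ^ 2 ∂μ = σ ^ 2)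
include hindep hmeas hL4 hmean hvar

lemma covariance_mul_mul (hfour : ∀ i, ∫ ω, ε i ω ^ 4 ∂μ = (3 + κ) * σ ^ 4) (i j k l : ι) :
    cov[fun ω => ε i ω * ε j ω, fun ω => ε k ω * ε l ω; μ] =
      σ ^ 4 * ((if i = k then 1 else 0) * (if j = l then 1 else 0) +
        (if i = l then 1 else 0) * (if j = k then 1 else 0)) +
      κ * σ ^ 4 *
        ((if i = j then 1 else 0) * (if j = k then 1 else 0) * (if k = l then 1 else 0)) := by
  rw [covariance_eq_sub ((hL4 j).mul' (hL4 i)) ((hL4 l).mul' (hL4 k))]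
  simp only [Pi.mul_apply, ← mul_assoc]
  rw [integral_mul_mul_mul_eq_mixedFourthMoment hindep hmeas hmean hvar hfour,
    integral_mul_eq_ite hindep hmeas hmean hvar, integral_mul_eq_ite hindep hmeas hmean hvar]
  unfold mixedFourthMoment
  split_ifs <;> ring

variable [Fintype ι]

theorem integral_dotProduct_mulVec (A : Matrix ι ι ℝ) :
    ∫ ω, (fun i => ε i ω) ⬝ᵥ A *ᵥ (fun i => ε i ω) ∂μ = σ ^ 2 * A.trace := by
  simp_rw [dotProduct_mulVec_eq_sum]
  rw [integral_finsetSum _ fun p _ =>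
    (((hL4 p.2).mul' (hL4 p.1)).integrable one_le_two).const_mul _]
  simp_rw [integral_const_mul, integral_mul_eq_ite hindep hmeas hmean hvar]
  simp [Fintype.sum_prod_type, trace, Finset.mul_sum, mul_comm]

theorem variance_dotProduct_mulVec (hfour : ∀ i, ∫ ω, ε i ω ^ 4 ∂μ = (3 + κ) * σ ^ 4)
    (A : Matrix ι ι ℝ) :
    Var[fun ω => (fun i => ε i ω) ⬝ᵥ A *ᵥ (fun i => ε i ω); μ] =
      σ ^ 4 * (∑ i, ∑ j, A i j ^ 2 + ∑ i, ∑ j, A i j * A j i) + κ * σ ^ 4 * ∑ i, A i i ^ 2 := by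
  let X : ι × ι → Ω → ℝ := fun p ω => A p.1 p.2 * (ε p.1 ω * ε p.2 ω)
  have hQ : (fun ω => (fun i => ε i ω) ⬝ᵥ A *ᵥ (fun i => ε i ω)) = fun ω => ∑ p, X p ω :=
    funext fun ω => dotProduct_mulVec_eq_sum A _
  rw [hQ, variance_fun_sum (X := X) fun p => ((hL4 p.2).mul' (hL4 p.1)).const_mul _]
  simp only [X, covariance_const_mul_left, covariance_const_mul_right,
    covariance_mul_mul hindep hmeas hL4 hmean hvar hfour]
  simp [Fintype.sum_prod_type, mul_add, Finset.sum_add_distrib, Finset.mul_sum, mul_ite, sq,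
    mul_comm, mul_left_comm, mul_assoc]

end QuadraticForm

end ProbabilityTheory

theorem variance_norm_squared_bound_general
    {Ω : Type*} [MeasurableSpace Ω] (μ : Measure Ω) [IsProbabilityMeasure μ]
    (n : ℕ) (ε : Fin n → Ω → ℝ)
    (hmeas : ∀ i, Measurable (ε i))
    (hindep : iIndepFun ε μ)
    (σ κ : ℝ)
    (hmean : ∀ i, ∫ ω, ε i ω ∂μ = 0)
    (hvar : ∀ i, ∫ ω, (ε i ω) ^ 2 ∂μ = σ ^ 2)
    (hfour_int : ∀ i, Integrable (fun ω => (ε i ω) ^ 4) μ)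
    (hfour : ∀ i, ∫ ω, (ε i ω) ^ 4 ∂μ = (3 + κ) * σ ^ 4)
    (M : Matrix (Fin n) (Fin n) ℝ) :
    (∫ ω, M.mulVec (fun i => ε i ω) ⬝ᵥ M.mulVec (fun i => ε i ω) ∂μ) =
        σ ^ 2 * (Mᵀ * M).trace ∧
      variance (fun ω => M.mulVec (fun i => ε i ω) ⬝ᵥ M.mulVec (fun i => ε i ω)) μ ≤
        (2 + |κ|) * σ ^ 2 * ‖Matrix.toEuclideanCLM (𝕜 := ℝ) (Mᵀ * M)‖ *
          ∫ ω, M.mulVec (fun i => ε i ω) ⬝ᵥ M.mulVec (fun i => ε i ω) ∂μ := by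
  have hL4 i := memLp_four_of_integrable_pow (hmeas i).aestronglyMeasurable (hfour_int i)
  set A := Mᵀ * M
  simp only [mulVec_dotProduct_mulVec_self]
  have hmeanQ := integral_dotProduct_mulVec hindep hmeas hL4 hmean hvar A
  refine ⟨hmeanQ, ?_⟩
  rw [variance_dotProduct_mulVec hindep hmeas hL4 hmean hvar hfour, hmeanQ]
  simp only [(isSymm_transpose_mul_self M).apply, ← sq]
  calc σ ^ 4 * (∑ i, ∑ j, A i j ^ 2 + ∑ i, ∑ j, A i j ^ 2) + κ * σ ^ 4 * ∑ i, A i i ^ 2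
      ≤ σ ^ 4 * (∑ i, ∑ j, A i j ^ 2 + ∑ i, ∑ j, A i j ^ 2) +
          |κ| * σ ^ 4 * ∑ i, ∑ j, A i j ^ 2 := by
        gcongr _ + ?_ * _ * ?_
        · exact le_abs_self κ
        · exact sum_sq_diag_le_sum_sq A
    _ = (2 + |κ|) * σ ^ 4 * ∑ i, ∑ j, A i j ^ 2 := by ring
    _ ≤ (2 + |κ|) * σ ^ 4 * (‖toEuclideanCLM (𝕜 := ℝ) A‖ * A.trace) := by
        gcongr
        exact sum_sq_transpose_mul_self_le M
    _ = _ := by ring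

/-- second part of Lemma 5: for i.i.d. errors with mean 0,
variance `σ²` and fourth moment `(3 + κ)·σ⁴`, for every `n×n` real matrix `M`,
`E[‖M ε‖²] = σ²·tr(Mᵀ·M)` and
`Var(‖M ε‖²) ≤ (2 + |κ|)·σ²·‖Mᵀ·M‖_op·E[‖M ε‖²]`, where `‖·‖_op` is the
operator (spectral) norm. -/
theorem variance_norm_squared_bound
    {Ω : Type*} [MeasurableSpace Ω] (μ : Measure Ω) [IsProbabilityMeasure μ]
    (n : ℕ) (ε : Fin n → Ω → ℝ)
    (hmeas : ∀ i, Measurable (ε i))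
    (hindep : iIndepFun ε μ)
    (hident : ∀ i j, IdentDistrib (ε i) (ε j) μ μ)
    (σ κ : ℝ) (hσ : 0 < σ)
    (hmean : ∀ i, ∫ ω, ε i ω ∂μ = 0)
    (hvar : ∀ i, ∫ ω, (ε i ω) ^ 2 ∂μ = σ ^ 2)
    (hfour_int : ∀ i, Integrable (fun ω => (ε i ω) ^ 4) μ)
    (hfour : ∀ i, ∫ ω, (ε i ω) ^ 4 ∂μ = (3 + κ) * σ ^ 4)
    (M : Matrix (Fin n) (Fin n) ℝ) :
    (∫ ω, M.mulVec (fun i => ε i ω) ⬝ᵥ M.mulVec (fun i => ε i ω) ∂μ) =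
        σ ^ 2 * (Mᵀ * M).trace ∧
      variance (fun ω => M.mulVec (fun i => ε i ω) ⬝ᵥ M.mulVec (fun i => ε i ω)) μ ≤
        (2 + |κ|) * σ ^ 2 * ‖Matrix.toEuclideanCLM (𝕜 := ℝ) (Mᵀ * M)‖ *
          ∫ ω, M.mulVec (fun i => ε i ω) ⬝ᵥ M.mulVec (fun i => ε i ω) ∂μ :=
  variance_norm_squared_bound_general μ n ε hmeas hindep σ κ hmean hvar hfour_int hfour M
end
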